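/- arXiv:1305.2015 — 18 statements merged into one kernel-verified Lean document; each statement's English description precedes it below -/
import Mathlib

section
/- For every nonnegative integer n, the Catalan number C_{n+1} equals the sum over k from 0 to n of det of the 2x2 matrix with entries binom(n,k), binom(n,k+1); binom(n+1,k), binom(n+1,k+1); i.e., C_{n+1} = \sum_{k=0}^{n} (binom(n,k)*binom(n+1,k+1) - binom(n,k+1)*binom(n+1,k)). -/
open Finset

lemma sumA (n : ℕ) : ∑ k ∈ range (n + 1), n.choose k * (n + 1).choose (k + 1)
    = (2 * n + 1).choose n := by
  have h : (2 * n + 1) = n + (n + 1) := by ring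
  rw [h, Nat.add_choose_eq, Finset.Nat.sum_antidiagonal_eq_sum_range_succ_mk]
  refine Finset.sum_congr rfl fun k hk => ?_
  simp only [Finset.mem_range] at hk
  have hk' : k + 1 ≤ n + 1 := hk
  rw [← Nat.choose_symm hk']
  have : n + 1 - (k + 1) = n - k := by omega
  rw [this]

lemma sumB (n : ℕ) : ∑ k ∈ range (n + 1), n.choose (k + 1) * (n + 1).choose k
    = (2 * n + 1).choose (n + 2) := by
  have h : (2 * n + 1) = n + (n + 1) := by ring
  rw [h, Nat.add_choose_eq, Finset.Nat.sum_antidiagonal_eq_sum_range_succ_mk]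
  symm
  rw [Finset.sum_range_succ' (fun i => n.choose i * (n + 1).choose (n + 2 - i)) (n + 2)]
  have h0 : n.choose 0 * (n + 1).choose (n + 2 - 0) = 0 := by
    have : (n + 1).choose (n + 2 - 0) = 0 := Nat.choose_eq_zero_of_lt (by omega)
    rw [this]; ring
  rw [h0, add_zero, Finset.sum_range_succ]
  have h1 : n.choose (n + 1 + 1) * (n + 1).choose (n + 2 - (n + 1 + 1)) = 0 := by
    rw [Nat.choose_eq_zero_of_lt (show n < n + 1 + 1 by omega)]; ring
  rw [h1, add_zero]
  refine Finset.sum_congr rfl fun k hk => ?_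
  simp only [Finset.mem_range] at hk
  have hk' : k ≤ n + 1 := by omega
  rw [← Nat.choose_symm hk']
  have h2 : n + 2 - (k + 1) = n + 1 - k := by omega
  rw [h2]

lemma catalan_key (n : ℕ) :
    catalan (n + 1) + (2 * n + 1).choose (n + 2) = (2 * n + 1).choose n := by
  have hA : (2 * n + 1).choose (n + 1) = (2 * n + 1).choose n := by
    have : n ≤ 2 * n + 1 := by omega
    rw [← Nat.choose_symm this]
    congr 1
    omega
  have hcb : (n + 1).centralBinom = 2 * (2 * n + 1).choose n := by
    rw [Nat.centralBinom]
    have h2 : 2 * (n + 1) = (2 * n + 1) + 1 := by ring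
    rw [h2, Nat.choose_succ_succ' (2 * n + 1) n, hA]
    ring
  have hB : (2 * n + 1).choose (n + 2) * (n + 2) = (2 * n + 1).choose n * n := by
    have := Nat.choose_succ_right_eq (2 * n + 1) (n + 1)
    rw [hA] at this
    convert this using 2
    omega
  have hc : (n + 2) * catalan (n + 1) = 2 * (2 * n + 1).choose n := by
    rw [← hcb]
    exact succ_mul_catalan_eq_centralBinom (n + 1)
  have hm : (n + 2) * (catalan (n + 1) + (2 * n + 1).choose (n + 2))
      = (n + 2) * ((2 * n + 1).choose n) := by
    rw [Nat.mul_add, hc, Nat.mul_comm (n+2), hB]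
    ring
  exact Nat.eq_of_mul_eq_mul_left (by omega) hm

theorem stmt_0 (n : ℕ) :
    (catalan (n + 1) : ℤ) =
      ∑ k ∈ Finset.range (n + 1),
        ((n.choose k : ℤ) * ((n + 1).choose (k + 1)) -
          (n.choose (k + 1)) * ((n + 1).choose k)) := by
  rw [Finset.sum_sub_distrib]
  have h1 : ∑ k ∈ Finset.range (n + 1), (n.choose k : ℤ) * ((n + 1).choose (k + 1))
      = ((2 * n + 1).choose n : ℤ) := by
    rw [← sumA n]; push_cast; rfl
  have h2 : ∑ k ∈ Finset.range (n + 1), (n.choose (k + 1) : ℤ) * ((n + 1).choose k)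
      = ((2 * n + 1).choose (n + 2) : ℤ) := by
    rw [← sumB n]; push_cast; rfl
  rw [h1, h2]
  have := catalan_key n
  omega
end

section
/- For every nonnegative integer n, C_n * C_{n+1} = \sum_{k=0}^{n} (2k+1)(2k+2)(2k+3) / ((2n+1)(2n+2)(2n+3)^2) * binom(2n+3, n-k) * binom(2n+3, n-k+1). -/
/-!
The sum is Gosper-summable. For every `m`, the term
`(m - 2j - 2)(m - 2j - 1)(m - 2j) C(m, j) C(m, j + 1)`, multiplied by `m - 1`, is the forward
difference in `j` of `j (j + 1) ((m - 2j)² + m - 2) C(m, j) C(m, j + 1)`. Reversing the order of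
summation (`k = n - j`) and taking `m = 2n + 3`, the sum telescopes to
`(n + 1)(n + 2) C(2n + 3, n + 1)²`, and `C(2n + 3, n + 1) = (2n + 3) C_{n+1}` together with
`(n + 2) C_{n+1} = 2 (2n + 1) C_n` gives the closed form.
-/

open Finset

theorem Nat.cast_add_one_mul_choose_succ {R : Type*} [CommRing R] (m j : ℕ) :
    ((j : R) + 1) * m.choose (j + 1) = ((m : R) - j) * m.choose j := by
  rcases le_or_gt j m with hjm | hmj
  · have h := congrArg (Nat.cast : ℕ → R) (Nat.choose_succ_right_eq m j)
    push_cast [Nat.cast_sub hjm] at h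
    linear_combination h
  · simp [Nat.choose_eq_zero_of_lt hmj, Nat.choose_eq_zero_of_lt (hmj.trans j.lt_succ_self)]

section

variable {R : Type*} [CommRing R] [IsDomain R] [CharZero R]

theorem choose_mul_choose_succ_antidiff (m j : ℕ) :
    ((j : R) + 1) * (j + 2) * ((m - 2 * (j + 1)) ^ 2 + m - 2) * m.choose (j + 1) * m.choose (j + 2)
        - (j : R) * (j + 1) * ((m - 2 * j) ^ 2 + m - 2) * m.choose j * m.choose (j + 1) =
      ((m : R) - 1) *
        ((m - 2 * j - 2) * (m - 2 * j - 1) * (m - 2 * j) * m.choose j * m.choose (j + 1)) := by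
  have h1 := Nat.cast_add_one_mul_choose_succ (R := R) m j
  have h2 := Nat.cast_add_one_mul_choose_succ (R := R) m (j + 1)
  push_cast at h2
  refine mul_left_cancel₀ (Nat.cast_add_one_ne_zero j : ((j : R) + 1) ≠ 0) ?_
  linear_combination ((j : R) + 1) ^ 2 * ((m - 2 * (j + 1)) ^ 2 + m - 2) * m.choose (j + 1) * h2
    + ((j : R) + 1) * (m - j - 1) * ((m - 2 * (j + 1)) ^ 2 + m - 2) * m.choose (j + 1) * h1

theorem sum_choose_mul_choose_succ (m N : ℕ) :
    ((m : R) - 1) * ∑ j ∈ range N,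
        ((m : R) - 2 * j - 2) * (m - 2 * j - 1) * (m - 2 * j) * m.choose j * m.choose (j + 1) =
      (N : R) * (N + 1) * ((m - 2 * N) ^ 2 + m - 2) * m.choose N * m.choose (N + 1) := by
  induction N with
  | zero => simp
  | succ N ih =>
    rw [sum_range_succ, mul_add, ih, ← choose_mul_choose_succ_antidiff]
    push_cast
    ring

end

theorem sum_reflect_choose_mul_choose_succ (n : ℕ) :
    ∑ k ∈ range (n + 1), ((2 * k + 1 : ℚ) * (2 * k + 2) * (2 * k + 3)) *
        (2 * n + 3).choose (n - k) * (2 * n + 3).choose (n - k + 1) =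
      (n + 1) * (n + 2) * (2 * n + 3).choose (n + 1) ^ 2 := by
  have hreflect : ∀ j ∈ range (n + 1),
      ((2 * (n + 1 - 1 - j : ℕ) + 1 : ℚ) * (2 * (n + 1 - 1 - j : ℕ) + 2) *
          (2 * (n + 1 - 1 - j : ℕ) + 3)) *
        (2 * n + 3).choose (n - (n + 1 - 1 - j)) * (2 * n + 3).choose (n - (n + 1 - 1 - j) + 1) =
      (2 * n + 3 - 2 * j - 2 : ℚ) * (2 * n + 3 - 2 * j - 1) * (2 * n + 3 - 2 * j) *
        (2 * n + 3).choose j * (2 * n + 3).choose (j + 1) := by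
    intro j hj
    have hjn : j ≤ n := Nat.lt_succ_iff.mp (mem_range.mp hj)
    rw [show n + 1 - 1 - j = n - j by omega, Nat.sub_sub_self hjn, Nat.cast_sub hjn]
    ring
  have hsymm : (2 * n + 3).choose (n + 1 + 1) = (2 * n + 3).choose (n + 1) := by
    rw [show 2 * n + 3 = 2 * (n + 1) + 1 by ring, Nat.choose_symm_half]
  have htelescope := sum_choose_mul_choose_succ (R := ℚ) (2 * n + 3) (n + 1)
  rw [hsymm] at htelescope
  push_cast at htelescope
  rw [← sum_range_reflect, sum_congr rfl hreflect]
  refine mul_left_cancel₀ (by positivity : (2 * (n : ℚ) + 2) ≠ 0) ?_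
  linear_combination htelescope

theorem Nat.choose_two_mul_add_one_eq_mul_catalan (n : ℕ) :
    (2 * n + 1).choose n = (2 * n + 1) * catalan n := by
  have h := Nat.add_one_mul_choose_eq (2 * n) n
  rw [Nat.choose_symm_half, ← Nat.centralBinom_eq_two_mul_choose,
    ← succ_mul_catalan_eq_centralBinom] at h
  refine Nat.eq_of_mul_eq_mul_right n.succ_pos ?_
  linarith

theorem add_two_mul_catalan_succ (n : ℕ) :
    (n + 2) * catalan (n + 1) = 2 * (2 * n + 1) * catalan n := by
  have h := Nat.succ_mul_centralBinom_succ n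
  rw [← succ_mul_catalan_eq_centralBinom, ← succ_mul_catalan_eq_centralBinom] at h
  refine Nat.eq_of_mul_eq_mul_left n.succ_pos ?_
  linarith

theorem stmt_2 (n : ℕ) :
    (catalan n : ℚ) * catalan (n + 1) =
      ∑ k ∈ Finset.range (n + 1),
        ((2 * k + 1 : ℚ) * (2 * k + 2) * (2 * k + 3)) /
            ((2 * n + 1 : ℚ) * (2 * n + 2) * (2 * n + 3) ^ 2) *
          ((2 * n + 3).choose (n - k)) * ((2 * n + 3).choose (n - k + 1)) := by
  have hchoose : ((2 * n + 3).choose (n + 1) : ℚ) = (2 * n + 3) * catalan (n + 1) := by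
    exact_mod_cast Nat.choose_two_mul_add_one_eq_mul_catalan (n + 1)
  have hcatalan : ((n : ℚ) + 2) * catalan (n + 1) = 2 * (2 * n + 1) * catalan n := by
    exact_mod_cast add_two_mul_catalan_succ n
  simp only [div_mul_eq_mul_div, ← sum_div, sum_reflect_choose_mul_choose_succ, hchoose]
  rw [eq_div_iff (by positivity)]
  linear_combination (-(2 * (n : ℚ) + 3) ^ 2 * (n + 1) * catalan (n + 1)) * hcatalan
end

section
/- For every nonnegative integer n, C_{n+1}^2 = \sum_{k=0}^{n} (2k+1)(2k+3)(8nk+2n+10k+4) / ((2n+1)(2n+2)(2n+3)(2n+4)(2n+5)) * binom(2n+2, n-k) * binom(2n+5, n-k+2). -/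
/-!
The summand is Gosper-summable in `k`: it is the difference `G(n,k) - G(n,k+1)` of a
hypergeometric term `G`, so the sum over `k < n` telescopes to `G(n,0) - G(n,n)`. The summand at
`k = n` equals `G(n,n)`, and `G(n,0)` reduces to `C_{n+1}^2` by the ratio identities between
neighbouring binomial coefficients.
-/

theorem Nat.cast_choose_succ_right_eq {K : Type*} [Field K] [CharZero K] {N j : ℕ} (h : j ≤ N) :
    (N.choose (j + 1) : K) = N.choose j * (N - j) / (j + 1) := by
  rw [eq_div_iff (Nat.cast_add_one_ne_zero j), ← Nat.cast_sub h]
  exact_mod_cast N.choose_succ_right_eq j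

theorem Nat.cast_succ_choose_eq {K : Type*} [Field K] [CharZero K] {N j : ℕ} (h : j ≤ N) :
    ((N + 1).choose j : K) = N.choose j * (N + 1) / (N + 1 - j) := by
  have hsub : ((N + 1 - j : ℕ) : K) = N + 1 - j := by
    push_cast [Nat.cast_sub (by omega : j ≤ N + 1)]; ring
  rw [eq_div_iff (by rw [← hsub]; exact_mod_cast (by omega)), ← hsub]
  exact_mod_cast (N.choose_mul_succ_eq j).symm

namespace CatalanSq

def term (n k : ℕ) : ℚ :=
  ((2 * k + 1 : ℚ) * (2 * k + 3) * (8 * n * k + 2 * n + 10 * k + 4)) /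
      ((2 * n + 1 : ℚ) * (2 * n + 2) * (2 * n + 3) * (2 * n + 4) * (2 * n + 5)) *
    ((2 * n + 2).choose (n - k)) * ((2 * n + 5).choose (n - k + 2))

/-- Gosper's algorithm applied to `term n` produces this antidifference. -/
def antidiff (n k : ℕ) : ℚ :=
  (8 * k ^ 4 + (16 * n + 44) * k ^ 3 + (8 * n ^ 2 + 52 * n + 70) * k ^ 2
      + (12 * n ^ 2 + 44 * n + 34) * k + 4 * n ^ 3 + 22 * n ^ 2 + 34 * n + 12 : ℚ) /
      ((2 * n + 1 : ℚ) * (2 * n + 2) * (2 * n + 3) * (2 * n + 4) * (2 * n + 5)) *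
    ((2 * n + 2).choose (n - k)) * ((2 * n + 5).choose (n - k + 2))

theorem term_eq_antidiff_sub {n k : ℕ} (hk : k < n) :
    term n k = antidiff n k - antidiff n (k + 1) := by
  obtain ⟨m, rfl⟩ : ∃ m, n = k + m + 1 := ⟨n - k - 1, by omega⟩
  have h₁ : ((2 * (k + m + 1) + 2).choose (m + 1) : ℚ)
      = (2 * (k + m + 1) + 2).choose m * (2 * k + m + 4) / (m + 1) := by
    rw [Nat.cast_choose_succ_right_eq (by omega)]; push_cast; ring
  have h₂ : ((2 * (k + m + 1) + 5).choose (m + 2 + 1) : ℚ)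
      = (2 * (k + m + 1) + 5).choose (m + 2) * (2 * k + m + 5) / (m + 3) := by
    rw [Nat.cast_choose_succ_right_eq (by omega)]; push_cast; ring
  simp only [term, antidiff, show k + m + 1 - k = m + 1 by omega,
    show k + m + 1 - (k + 1) = m by omega, h₁, h₂]
  field_simp
  push_cast
  ring

theorem antidiff_self (n : ℕ) : antidiff n n = term n n := by
  simp only [term, antidiff]
  ring

theorem antidiff_zero (n : ℕ) : antidiff n 0 = (catalan (n + 1) : ℚ) ^ 2 := by
  have hcat : (catalan (n + 1) : ℚ) = (2 * n + 2).choose (n + 1) / (n + 2) := by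
    rw [eq_div_iff (by positivity)]
    exact_mod_cast (mul_comm _ _).trans (succ_mul_catalan_eq_centralBinom (n + 1))
  have h₁ : ((2 * n + 2).choose (n + 1) : ℚ) = (2 * n + 2).choose n * (n + 2) / (n + 1) := by
    rw [Nat.cast_choose_succ_right_eq (by omega)]; push_cast; ring
  have h₂ : ((2 * n + 4).choose (n + 2) : ℚ)
      = 2 * (2 * n + 3) * (2 * n + 2).choose (n + 1) / (n + 2) := by
    rw [eq_div_iff (by positivity)]
    have h : (n + 2) * (2 * n + 4).choose (n + 2) = 2 * (2 * n + 3) * (2 * n + 2).choose (n + 1) :=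
      Nat.succ_mul_centralBinom_succ (n + 1)
    exact_mod_cast (mul_comm _ _).trans h
  have h₃ : ((2 * n + 5).choose (n + 2) : ℚ)
      = (2 * n + 4).choose (n + 2) * (2 * n + 5) / (n + 3) := by
    rw [Nat.cast_succ_choose_eq (N := 2 * n + 4) (by omega)]; push_cast; ring_nf
  simp only [antidiff, Nat.sub_zero, hcat, h₃, h₂, h₁]
  field_simp
  ring

end CatalanSq

theorem stmt_3 (n : ℕ) :
    (catalan (n + 1) : ℚ) ^ 2 =
      ∑ k ∈ Finset.range (n + 1),
        ((2 * k + 1 : ℚ) * (2 * k + 3) * (8 * n * k + 2 * n + 10 * k + 4)) /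
            ((2 * n + 1 : ℚ) * (2 * n + 2) * (2 * n + 3) * (2 * n + 4) * (2 * n + 5)) *
          ((2 * n + 2).choose (n - k)) * ((2 * n + 5).choose (n - k + 2)) := by
  change _ = ∑ k ∈ Finset.range (n + 1), CatalanSq.term n k
  have telescope : ∑ k ∈ Finset.range n, CatalanSq.term n k
      = CatalanSq.antidiff n 0 - CatalanSq.antidiff n n := by
    rw [← Finset.sum_range_sub']
    exact Finset.sum_congr rfl fun k hk ↦ CatalanSq.term_eq_antidiff_sub (Finset.mem_range.mp hk)
  rw [Finset.sum_range_succ, telescope, ← CatalanSq.antidiff_self, CatalanSq.antidiff_zero]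
  ring
end

section
/- For every nonnegative integer n, C_n * C_{n+2} = \sum_{k=0}^{n} (2k+1)(2k+3)(8nk+14n+10k+16) / ((2n+1)(2n+2)(2n+3)(2n+4)(2n+5)) * binom(2n+2, n-k) * binom(2n+5, n-k+1). -/
theorem stmt_4 (n : ℕ) :
    (catalan n : ℚ) * catalan (n + 2) =
      ∑ k ∈ Finset.range (n + 1),
        ((2 * k + 1 : ℚ) * (2 * k + 3) * (8 * n * k + 14 * n + 10 * k + 16)) /
            ((2 * n + 1 : ℚ) * (2 * n + 2) * (2 * n + 3) * (2 * n + 4) * (2 * n + 5)) *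
          ((2 * n + 2).choose (n - k)) * ((2 * n + 5).choose (n - k + 1)) := by
  set G : ℕ → ℚ := fun j =>
    (-(8 * (j : ℚ) ^ 4 + (16 * (n : ℚ) + 60) * (j : ℚ) ^ 3
        + (8 * (n : ℚ) ^ 2 + 76 * (n : ℚ) + 142) * (j : ℚ) ^ 2
        + (20 * (n : ℚ) ^ 2 + 108 * (n : ℚ) + 132) * (j : ℚ)
        + (4 * (n : ℚ) ^ 3 + 30 * (n : ℚ) ^ 2 + 68 * (n : ℚ) + 48))
      * (((2 * n + 2).choose (n - j) : ℚ)) * (((2 * n + 5).choose (n - j + 1) : ℚ)))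
      / ((2 * (n : ℚ) + 1) * (2 * (n : ℚ) + 2) * (2 * (n : ℚ) + 3) * (2 * (n : ℚ) + 4)
          * (2 * (n : ℚ) + 5)) with hG
  have tele : (∑ k ∈ Finset.range n,
      ((2 * k + 1 : ℚ) * (2 * k + 3) * (8 * n * k + 14 * n + 10 * k + 16)) /
            ((2 * n + 1 : ℚ) * (2 * n + 2) * (2 * n + 3) * (2 * n + 4) * (2 * n + 5)) *
          ((2 * n + 2).choose (n - k)) * ((2 * n + 5).choose (n - k + 1)))
      = G n - G 0 := by
    rw [← Finset.sum_range_sub G n]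
    refine Finset.sum_congr rfl fun k hk => ?_
    rw [Finset.mem_range] at hk
    obtain ⟨d, rfl⟩ : ∃ d, n = k + 1 + d := ⟨n - (k + 1), by omega⟩
    have h1 := Nat.choose_succ_right_eq (2 * (k + 1 + d) + 2) d
    have h2 := Nat.choose_succ_right_eq (2 * (k + 1 + d) + 5) (d + 1)
    rw [show 2 * (k + 1 + d) + 2 - d = 2 * k + d + 4 by omega] at h1
    rw [show 2 * (k + 1 + d) + 5 - (d + 1) = 2 * k + d + 6 by omega] at h2
    have h1q : (((2 * (k + 1 + d) + 2).choose (d + 1) : ℚ)) * ((d : ℚ) + 1)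
        = (((2 * (k + 1 + d) + 2).choose d : ℚ)) * (2 * (k : ℚ) + d + 4) := by
      exact_mod_cast congrArg (Nat.cast : ℕ → ℚ) h1
    have h2q : (((2 * (k + 1 + d) + 5).choose (d + 2) : ℚ)) * ((d : ℚ) + 2)
        = (((2 * (k + 1 + d) + 5).choose (d + 1) : ℚ)) * (2 * (k : ℚ) + d + 6) := by
      exact_mod_cast congrArg (Nat.cast : ℕ → ℚ) h2
    have hQ : (2 * (k : ℚ) + d + 4) * (2 * (k : ℚ) + d + 6) ≠ 0 := by positivity
    have key : ((2 * (k : ℚ) + 1) * (2 * (k : ℚ) + 3)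
          * (8 * ((k : ℚ) + 1 + d) * k + 14 * ((k : ℚ) + 1 + d) + 10 * k + 16))
          * (((2 * (k + 1 + d) + 2).choose (d + 1) : ℚ))
          * (((2 * (k + 1 + d) + 5).choose (d + 2) : ℚ))
        = (-(8 * ((k : ℚ) + 1) ^ 4 + (16 * ((k : ℚ) + 1 + d) + 60) * ((k : ℚ) + 1) ^ 3
            + (8 * ((k : ℚ) + 1 + d) ^ 2 + 76 * ((k : ℚ) + 1 + d) + 142) * ((k : ℚ) + 1) ^ 2
            + (20 * ((k : ℚ) + 1 + d) ^ 2 + 108 * ((k : ℚ) + 1 + d) + 132) * ((k : ℚ) + 1)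
            + (4 * ((k : ℚ) + 1 + d) ^ 3 + 30 * ((k : ℚ) + 1 + d) ^ 2 + 68 * ((k : ℚ) + 1 + d) + 48))
            * (((2 * (k + 1 + d) + 2).choose d : ℚ))
            * (((2 * (k + 1 + d) + 5).choose (d + 1) : ℚ)))
          - (-(8 * (k : ℚ) ^ 4 + (16 * ((k : ℚ) + 1 + d) + 60) * (k : ℚ) ^ 3
            + (8 * ((k : ℚ) + 1 + d) ^ 2 + 76 * ((k : ℚ) + 1 + d) + 142) * (k : ℚ) ^ 2
            + (20 * ((k : ℚ) + 1 + d) ^ 2 + 108 * ((k : ℚ) + 1 + d) + 132) * (k : ℚ)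
            + (4 * ((k : ℚ) + 1 + d) ^ 3 + 30 * ((k : ℚ) + 1 + d) ^ 2 + 68 * ((k : ℚ) + 1 + d) + 48))
            * (((2 * (k + 1 + d) + 2).choose (d + 1) : ℚ))
            * (((2 * (k + 1 + d) + 5).choose (d + 2) : ℚ))) := by
      apply mul_left_cancel₀ hQ
      linear_combination
        ((-(8 * ((k : ℚ) + 1) ^ 4 + (16 * ((k : ℚ) + 1 + d) + 60) * ((k : ℚ) + 1) ^ 3
            + (8 * ((k : ℚ) + 1 + d) ^ 2 + 76 * ((k : ℚ) + 1 + d) + 142) * ((k : ℚ) + 1) ^ 2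
            + (20 * ((k : ℚ) + 1 + d) ^ 2 + 108 * ((k : ℚ) + 1 + d) + 132) * ((k : ℚ) + 1)
            + (4 * ((k : ℚ) + 1 + d) ^ 3 + 30 * ((k : ℚ) + 1 + d) ^ 2 + 68 * ((k : ℚ) + 1 + d) + 48)))
          * ((d : ℚ) + 2) * (((2 * (k + 1 + d) + 5).choose (d + 2) : ℚ))) * h1q
        + ((-(8 * ((k : ℚ) + 1) ^ 4 + (16 * ((k : ℚ) + 1 + d) + 60) * ((k : ℚ) + 1) ^ 3
            + (8 * ((k : ℚ) + 1 + d) ^ 2 + 76 * ((k : ℚ) + 1 + d) + 142) * ((k : ℚ) + 1) ^ 2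
            + (20 * ((k : ℚ) + 1 + d) ^ 2 + 108 * ((k : ℚ) + 1 + d) + 132) * ((k : ℚ) + 1)
            + (4 * ((k : ℚ) + 1 + d) ^ 3 + 30 * ((k : ℚ) + 1 + d) ^ 2 + 68 * ((k : ℚ) + 1 + d) + 48)))
          * (2 * (k : ℚ) + d + 4) * (((2 * (k + 1 + d) + 2).choose d : ℚ))) * h2q
    simp only [hG, show k + 1 + d - (k + 1) = d by omega, show k + 1 + d - k = d + 1 by omega]
    linear_combination (norm := (push_cast; ring1))
      key / ((2 * ((k : ℚ) + 1 + d) + 1) * (2 * ((k : ℚ) + 1 + d) + 2) * (2 * ((k : ℚ) + 1 + d) + 3)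
        * (2 * ((k : ℚ) + 1 + d) + 4) * (2 * ((k : ℚ) + 1 + d) + 5))
  have last : ((2 * n + 1 : ℚ) * (2 * n + 3) * (8 * n * n + 14 * n + 10 * n + 16)) /
            ((2 * n + 1 : ℚ) * (2 * n + 2) * (2 * n + 3) * (2 * n + 4) * (2 * n + 5)) *
          ((2 * n + 2).choose (n - n)) * ((2 * n + 5).choose (n - n + 1)) = -G n := by
    simp only [hG, Nat.sub_self, Nat.zero_add, Nat.choose_zero_right, Nat.choose_one_right]
    push_cast
    ring
  -- final evaluation of -G 0
  have f1 := Nat.add_one_mul_choose_eq (2 * n) n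
  have f2 : (2 * n + 1).choose n = (2 * n + 1).choose (n + 1) := by
    rw [← Nat.choose_symm (by omega : n + 1 ≤ 2 * n + 1), show 2 * n + 1 - (n + 1) = n by omega]
  have f3 := Nat.add_one_mul_choose_eq (2 * n + 1) n
  have f4 := Nat.choose_succ_right_eq (2 * n + 2) n
  rw [show 2 * n + 2 - n = n + 2 by omega] at f4
  have f5 := Nat.add_one_mul_choose_eq (2 * n + 4) n
  have f6 := Nat.choose_succ_right_eq (2 * n + 4) n
  rw [show 2 * n + 4 - n = n + 4 by omega] at f6
  have f7 := Nat.choose_succ_right_eq (2 * n + 4) (n + 1)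
  rw [show 2 * n + 4 - (n + 1) = n + 3 by omega] at f7
  have fc1 : (n + 1) * catalan n = (2 * n).choose n := by
    have := succ_mul_catalan_eq_centralBinom n
    rwa [Nat.centralBinom_eq_two_mul_choose] at this
  have fc2 : (n + 3) * catalan (n + 2) = (2 * n + 4).choose (n + 2) := by
    have := succ_mul_catalan_eq_centralBinom (n + 2)
    rwa [Nat.centralBinom_eq_two_mul_choose, show 2 * (n + 2) = 2 * n + 4 by omega,
      show n + 2 + 1 = n + 3 by omega] at this
  have q1 : (2 * (n : ℚ) + 1) * ((2 * n).choose n : ℚ)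
      = ((2 * n + 1).choose (n + 1) : ℚ) * ((n : ℚ) + 1) := by exact_mod_cast f1
  have q2 : ((2 * n + 1).choose n : ℚ) = ((2 * n + 1).choose (n + 1) : ℚ) := by exact_mod_cast f2
  have q3 : (2 * (n : ℚ) + 2) * ((2 * n + 1).choose n : ℚ)
      = ((2 * n + 2).choose (n + 1) : ℚ) * ((n : ℚ) + 1) := by exact_mod_cast f3
  have q4 : ((2 * n + 2).choose (n + 1) : ℚ) * ((n : ℚ) + 1)
      = ((2 * n + 2).choose n : ℚ) * ((n : ℚ) + 2) := by exact_mod_cast f4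
  have q5 : (2 * (n : ℚ) + 5) * ((2 * n + 4).choose n : ℚ)
      = ((2 * n + 5).choose (n + 1) : ℚ) * ((n : ℚ) + 1) := by exact_mod_cast f5
  have q6 : ((2 * n + 4).choose (n + 1) : ℚ) * ((n : ℚ) + 1)
      = ((2 * n + 4).choose n : ℚ) * ((n : ℚ) + 4) := by exact_mod_cast f6
  have q7 : ((2 * n + 4).choose (n + 2) : ℚ) * ((n : ℚ) + 2)
      = ((2 * n + 4).choose (n + 1) : ℚ) * ((n : ℚ) + 3) := by exact_mod_cast f7
  have qc1 : ((n : ℚ) + 1) * (catalan n : ℚ) = ((2 * n).choose n : ℚ) := by exact_mod_cast fc1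
  have qc2 : ((n : ℚ) + 3) * (catalan (n + 2) : ℚ) = ((2 * n + 4).choose (n + 2) : ℚ) := by
    exact_mod_cast fc2
  have E1 : ((2 * n + 2).choose n : ℚ) * (((n : ℚ) + 1) * ((n : ℚ) + 2))
      = ((2 * n).choose n : ℚ) * ((2 * (n : ℚ) + 1) * (2 * (n : ℚ) + 2)) := by
    linear_combination (-(2 * (n : ℚ) + 2)) * q1 + ((2 * (n : ℚ) + 2) * ((n : ℚ) + 1)) * q2
      - ((n : ℚ) + 1) * q3 - ((n : ℚ) + 1) * q4
  have E2 : ((2 * n + 5).choose (n + 1) : ℚ) * (((n : ℚ) + 1) * ((n : ℚ) + 3) * ((n : ℚ) + 4))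
      = ((2 * n + 4).choose (n + 2) : ℚ) * ((2 * (n : ℚ) + 5) * ((n : ℚ) + 2) * ((n : ℚ) + 1)) := by
    linear_combination (-((n : ℚ) + 3) * ((n : ℚ) + 4)) * q5
      - ((2 * (n : ℚ) + 5) * ((n : ℚ) + 3)) * q6 - ((2 * (n : ℚ) + 5) * ((n : ℚ) + 1)) * q7
  have hD : ((2 * (n : ℚ) + 1) * (2 * (n : ℚ) + 2) * (2 * (n : ℚ) + 3) * (2 * (n : ℚ) + 4)
      * (2 * (n : ℚ) + 5)) ≠ 0 := by positivity
  have main2 : (catalan n : ℚ) * (catalan (n + 2) : ℚ)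
      = ((4 * (n : ℚ) ^ 3 + 30 * (n : ℚ) ^ 2 + 68 * (n : ℚ) + 48) * ((2 * n + 2).choose n : ℚ)
          * ((2 * n + 5).choose (n + 1) : ℚ))
        / ((2 * (n : ℚ) + 1) * (2 * (n : ℚ) + 2) * (2 * (n : ℚ) + 3) * (2 * (n : ℚ) + 4)
          * (2 * (n : ℚ) + 5)) := by
    rw [eq_div_iff hD]
    have hM : ((n : ℚ) + 1) ^ 2 * ((n : ℚ) + 2) * ((n : ℚ) + 3) * ((n : ℚ) + 4) ≠ 0 := by positivity
    apply mul_right_cancel₀ hM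
    linear_combination
      ((catalan (n + 2) : ℚ) * ((2 * (n : ℚ) + 1) * (2 * (n : ℚ) + 2) * (2 * (n : ℚ) + 3)
          * (2 * (n : ℚ) + 4) * (2 * (n : ℚ) + 5)) * ((n : ℚ) + 1) * ((n : ℚ) + 2) * ((n : ℚ) + 3)
          * ((n : ℚ) + 4)) * qc1
      + (((2 * n).choose n : ℚ) * ((2 * (n : ℚ) + 1) * (2 * (n : ℚ) + 2) * (2 * (n : ℚ) + 3)
          * (2 * (n : ℚ) + 4) * (2 * (n : ℚ) + 5)) * ((n : ℚ) + 1) * ((n : ℚ) + 2)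
          * ((n : ℚ) + 4)) * qc2
      - ((4 * (n : ℚ) ^ 3 + 30 * (n : ℚ) ^ 2 + 68 * (n : ℚ) + 48)
          * ((2 * n + 5).choose (n + 1) : ℚ) * ((n : ℚ) + 1) * ((n : ℚ) + 3) * ((n : ℚ) + 4)) * E1
      - ((4 * (n : ℚ) ^ 3 + 30 * (n : ℚ) ^ 2 + 68 * (n : ℚ) + 48) * ((2 * n).choose n : ℚ)
          * (2 * (n : ℚ) + 1) * (2 * (n : ℚ) + 2)) * E2
  have final : (catalan n : ℚ) * (catalan (n + 2) : ℚ) = -G 0 := by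
    simp only [hG, Nat.sub_zero, Nat.cast_zero]
    linear_combination main2
  simp only [Finset.sum_range_succ]
  rw [tele, last, final]
  ring
end

section
/- For every nonnegative integer n, C_{n+1}^2 = \sum_{k=0}^{n} (2k+2)(2k+3)(2k+4) / ((2n+2)(2n+3)(2n+4)^2) * binom(2n+4, n-k) * binom(2n+4, n-k+1). -/
open Finset Nat

private lemma tele (n : ℕ) : ∀ m, m ≤ n + 1 →
    (2 * (n : ℚ) + 3) * ∑ j ∈ Finset.range m,
      (2 * (n : ℚ) - 2 * j + 2) * (2 * (n : ℚ) - 2 * j + 3) * (2 * (n : ℚ) - 2 * j + 4) *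
        ((2 * n + 4).choose j) * ((2 * n + 4).choose (j + 1))
    = (m : ℚ) * ((m : ℚ) + 1) *
        (4 * (m : ℚ) ^ 2 - 4 * (2 * (n : ℚ) + 4) * m + (2 * (n : ℚ) + 3) * (2 * (n : ℚ) + 6)) *
        ((2 * n + 4).choose m) * ((2 * n + 4).choose (m + 1)) := by
  intro m
  induction m with
  | zero => intro _; simp
  | succ m ih =>
    intro hm
    have hm' : m ≤ n + 1 := Nat.le_of_succ_le hm
    rw [Finset.sum_range_succ, mul_add, ih hm']
    have h1 : ((2 * n + 4).choose (m + 1) : ℚ) * ((m : ℚ) + 1)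
        = ((2 * n + 4).choose m : ℚ) * (2 * (n : ℚ) + 4 - m) := by
      have h := Nat.choose_succ_right_eq (2 * n + 4) m
      have h' := congrArg (fun x : ℕ => (x : ℚ)) h
      push_cast [Nat.cast_sub (by omega : m ≤ 2 * n + 4)] at h'
      linear_combination h'
    have h2 : ((2 * n + 4).choose (m + 2) : ℚ) * ((m : ℚ) + 2)
        = ((2 * n + 4).choose (m + 1) : ℚ) * (2 * (n : ℚ) + 4 - m - 1) := by
      have h := Nat.choose_succ_right_eq (2 * n + 4) (m + 1)
      have h' := congrArg (fun x : ℕ => (x : ℚ)) h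
      push_cast [Nat.cast_sub (by omega : m + 1 ≤ 2 * n + 4),
        Nat.cast_sub (by omega : m ≤ 2 * n + 3)] at h'
      linear_combination h'
    have hne : ((m : ℚ) + 1) * ((m : ℚ) + 2) ≠ 0 := by positivity
    apply mul_right_cancel₀ hne
    push_cast
    linear_combination
      (-(((m : ℚ) + 1) * ((m : ℚ) + 2) *
          (4 * ((m : ℚ) + 1) ^ 2 - 4 * (2 * (n : ℚ) + 4) * ((m : ℚ) + 1) +
            (2 * (n : ℚ) + 3) * (2 * (n : ℚ) + 6))) *
        (2 * (n : ℚ) + 4 - m - 1) * ((2 * n + 4).choose (m + 1) : ℚ)) * h1 +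
      (-(((m : ℚ) + 1) * ((m : ℚ) + 2) *
          (4 * ((m : ℚ) + 1) ^ 2 - 4 * (2 * (n : ℚ) + 4) * ((m : ℚ) + 1) +
            (2 * (n : ℚ) + 3) * (2 * (n : ℚ) + 6))) *
        ((m : ℚ) + 1) * ((2 * n + 4).choose (m + 1) : ℚ)) * h2

theorem stmt_5 (n : ℕ) :
    (catalan (n + 1) : ℚ) ^ 2 =
      ∑ k ∈ Finset.range (n + 1),
        ((2 * k + 2 : ℚ) * (2 * k + 3) * (2 * k + 4)) /
            ((2 * n + 2 : ℚ) * (2 * n + 3) * (2 * n + 4) ^ 2) *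
          ((2 * n + 4).choose (n - k)) * ((2 * n + 4).choose (n - k + 1)) := by
  have key := tele n (n + 1) le_rfl
  have step1 : ∑ k ∈ Finset.range (n + 1),
      ((2 * k + 2 : ℚ) * (2 * k + 3) * (2 * k + 4)) /
          ((2 * n + 2 : ℚ) * (2 * n + 3) * (2 * n + 4) ^ 2) *
        ((2 * n + 4).choose (n - k)) * ((2 * n + 4).choose (n - k + 1))
      = (∑ k ∈ Finset.range (n + 1),
          (2 * (k : ℚ) + 2) * (2 * (k : ℚ) + 3) * (2 * (k : ℚ) + 4) *
            ((2 * n + 4).choose (n - k)) * ((2 * n + 4).choose (n - k + 1))) /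
          ((2 * n + 2 : ℚ) * (2 * n + 3) * (2 * n + 4) ^ 2) := by
    rw [Finset.sum_div]
    exact Finset.sum_congr rfl fun k _ => by ring
  have step2 : ∑ k ∈ Finset.range (n + 1),
      (2 * (k : ℚ) + 2) * (2 * (k : ℚ) + 3) * (2 * (k : ℚ) + 4) *
        ((2 * n + 4).choose (n - k)) * ((2 * n + 4).choose (n - k + 1))
      = ∑ j ∈ Finset.range (n + 1),
        (2 * (n : ℚ) - 2 * j + 2) * (2 * (n : ℚ) - 2 * j + 3) * (2 * (n : ℚ) - 2 * j + 4) *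
          ((2 * n + 4).choose j) * ((2 * n + 4).choose (j + 1)) := by
    rw [← Finset.sum_range_reflect (fun k =>
      (2 * (k : ℚ) + 2) * (2 * (k : ℚ) + 3) * (2 * (k : ℚ) + 4) *
        ((2 * n + 4).choose (n - k)) * ((2 * n + 4).choose (n - k + 1))) (n + 1)]
    apply Finset.sum_congr rfl
    intro j hj
    have hj' : j ≤ n := by
      have := Finset.mem_range.mp hj; omega
    simp only [Nat.add_sub_cancel]
    rw [Nat.sub_sub_self hj', Nat.cast_sub hj']
    ring
  rw [step1, step2]
  -- now express the sum via key and factorials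
  have hD : ((2 * n + 2 : ℚ) * (2 * n + 3) * (2 * n + 4) ^ 2) ≠ 0 := by positivity
  have hcat : ((n : ℚ) + 2) * (catalan (n + 1) : ℚ) = ((2 * n + 2).choose (n + 1) : ℚ) := by
    have h := succ_mul_catalan_eq_centralBinom (n + 1)
    have h' := congrArg (fun x : ℕ => (x : ℚ)) h
    simp only [Nat.centralBinom] at h'
    push_cast at h'
    rw [show 2 * (n + 1) = 2 * n + 2 by ring] at h'
    linear_combination h'
  have hB : ((2 * n + 2).choose (n + 1) : ℚ) = ((2 * n + 2)! : ℚ) / (((n + 1)! : ℚ) * ((n + 1)! : ℚ)) := by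
    rw [Nat.cast_choose ℚ (by omega : n + 1 ≤ 2 * n + 2), show 2 * n + 2 - (n + 1) = n + 1 by omega]
  have hX1 : ((2 * n + 4).choose (n + 1) : ℚ) = ((2 * n + 4)! : ℚ) / (((n + 1)! : ℚ) * ((n + 3)! : ℚ)) := by
    rw [Nat.cast_choose ℚ (by omega : n + 1 ≤ 2 * n + 4), show 2 * n + 4 - (n + 1) = n + 3 by omega]
  have hX2 : ((2 * n + 4).choose (n + 1 + 1) : ℚ) = ((2 * n + 4)! : ℚ) / (((n + 2)! : ℚ) * ((n + 2)! : ℚ)) := by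
    rw [show n + 1 + 1 = n + 2 from rfl,
      Nat.cast_choose ℚ (by omega : n + 2 ≤ 2 * n + 4), show 2 * n + 4 - (n + 2) = n + 2 by omega]
  have hF1 : ((2 * n + 4)! : ℚ) = (2 * (n : ℚ) + 4) * (2 * (n : ℚ) + 3) * ((2 * n + 2)! : ℚ) := by
    rw [show 2 * n + 4 = (2 * n + 3) + 1 by omega, Nat.factorial_succ,
      show 2 * n + 3 = (2 * n + 2) + 1 by omega, Nat.factorial_succ]
    push_cast; ring
  have hF2 : ((n + 3)! : ℚ) = ((n : ℚ) + 3) * ((n : ℚ) + 2) * ((n + 1)! : ℚ) := by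
    rw [show n + 3 = (n + 2) + 1 by omega, Nat.factorial_succ, Nat.factorial_succ]
    push_cast; ring
  have hF3 : ((n + 2)! : ℚ) = ((n : ℚ) + 2) * ((n + 1)! : ℚ) := by
    rw [Nat.factorial_succ]; push_cast; ring
  have hfne : ((n + 1)! : ℚ) ≠ 0 := Nat.cast_ne_zero.mpr (Nat.factorial_ne_zero _)
  have hn2 : ((n : ℚ) + 2) ≠ 0 := by positivity
  have hcat' : (catalan (n + 1) : ℚ)
      = ((2 * n + 2)! : ℚ) / (((n + 1)! : ℚ) * ((n + 1)! : ℚ) * ((n : ℚ) + 2)) := by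
    have hB' : ((2 * n + 2).choose (n + 1) : ℚ) * (((n + 1)! : ℚ) * ((n + 1)! : ℚ))
        = ((2 * n + 2)! : ℚ) := by
      rw [hB]; field_simp
    rw [eq_div_iff (by positivity)]
    linear_combination hcat * (((n + 1)! : ℚ) * ((n + 1)! : ℚ)) + hB'
  have hSum : (∑ j ∈ Finset.range (n + 1),
      (2 * (n : ℚ) - 2 * j + 2) * (2 * (n : ℚ) - 2 * j + 3) * (2 * (n : ℚ) - 2 * j + 4) *
        ((2 * n + 4).choose j) * ((2 * n + 4).choose (j + 1)))
      = ((2 * n + 2 : ℚ) * (2 * n + 3) * (2 * n + 4) ^ 2) * (catalan (n + 1) : ℚ) ^ 2 := by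
    have h2n3 : (2 * (n : ℚ) + 3) ≠ 0 := by positivity
    apply mul_left_cancel₀ h2n3
    rw [key, hX1, hX2, hcat', hF1, hF2, hF3]
    push_cast
    field_simp
    ring
  rw [hSum]
  exact (mul_div_cancel_left₀ _ hD).symm
end

section
/- For every nonnegative integer n, C_{n+1} * C_{n+2} = \sum_{k=0}^{n} (2k+2)(2k+4)(8nk+6n+14k+12) / ((2n+2)(2n+3)(2n+4)(2n+5)(2n+6)) * binom(2n+3, n-k) * binom(2n+6, n-k+2). -/
noncomputable def gQ (n k : ℕ) : ℚ :=
  4 * (((n : ℚ) + 2) * ((n : ℚ) + 3) * ((n : ℚ) + 4)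
      + (5 * (n : ℚ) ^ 2 + 32 * n + 50) * k
      + (2 * (n : ℚ) ^ 2 + 21 * n + 47) * (k : ℚ) ^ 2
      + (4 * (n : ℚ) + 17) * (k : ℚ) ^ 3 + 2 * (k : ℚ) ^ 4) /
    ((2 * (n : ℚ) + 2) * (2 * (n : ℚ) + 3) * (2 * (n : ℚ) + 4) * (2 * (n : ℚ) + 5) *
        (2 * (n : ℚ) + 6)) *
    ((2 * n + 3).choose (n - k)) * ((2 * n + 6).choose (n - k + 2))

lemma lemA (n k : ℕ) (h : k < n) :
    ((2 * k + 2 : ℚ) * (2 * k + 4) * (8 * n * k + 6 * n + 14 * k + 12)) /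
        ((2 * n + 2 : ℚ) * (2 * n + 3) * (2 * n + 4) * (2 * n + 5) * (2 * n + 6)) *
      ((2 * n + 3).choose (n - k)) * ((2 * n + 6).choose (n - k + 2)) =
    gQ n k - gQ n (k + 1) := by
  obtain ⟨i, rfl⟩ : ∃ i, n = k + i + 1 := ⟨n - k - 1, by omega⟩
  have s1 : k + i + 1 - k = i + 1 := by omega
  have s2 : k + i + 1 - (k + 1) = i := by omega
  unfold gQ
  rw [s1, s2]
  have h1 : (((2 * (k + i + 1) + 3).choose (i + 1) : ℚ)) * (i + 1) =
      ((2 * (k + i + 1) + 3).choose i) * (2 * k + i + 5) := by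
    have t := Nat.choose_succ_right_eq (2 * (k + i + 1) + 3) i
    have e : 2 * (k + i + 1) + 3 - i = 2 * k + i + 5 := by omega
    rw [e] at t
    exact_mod_cast t
  have h2 : (((2 * (k + i + 1) + 6).choose (i + 3) : ℚ)) * (i + 3) =
      ((2 * (k + i + 1) + 6).choose (i + 2)) * (2 * k + i + 6) := by
    have t := Nat.choose_succ_right_eq (2 * (k + i + 1) + 6) (i + 2)
    have e : 2 * (k + i + 1) + 6 - (i + 2) = 2 * k + i + 6 := by omega
    have e2 : i + 2 + 1 = i + 3 := by omega
    rw [e, e2] at t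
    exact_mod_cast t
  have d1 : ((2 : ℚ) * k + i + 5) ≠ 0 := by positivity
  have d2 : ((2 : ℚ) * k + i + 6) ≠ 0 := by positivity
  have e1 : (((2 * (k + i + 1) + 3).choose i : ℚ)) =
      ((2 * (k + i + 1) + 3).choose (i + 1)) * (i + 1) / (2 * k + i + 5) := by
    field_simp
    linarith [h1]
  have e2 : (((2 * (k + i + 1) + 6).choose (i + 2) : ℚ)) =
      ((2 * (k + i + 1) + 6).choose (i + 3)) * (i + 3) / (2 * k + i + 6) := by
    field_simp
    linarith [h2]
  rw [e1, e2]
  have hD : ((2 * ((k : ℚ) + i + 1) + 2) * (2 * ((k : ℚ) + i + 1) + 3) *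
      (2 * ((k : ℚ) + i + 1) + 4) * (2 * ((k : ℚ) + i + 1) + 5) *
      (2 * ((k : ℚ) + i + 1) + 6)) ≠ 0 := by positivity
  push_cast
  field_simp
  ring

lemma lemB (n : ℕ) :
    ((2 * n + 2 : ℚ) * (2 * n + 4) * (8 * n * n + 6 * n + 14 * n + 12)) /
        ((2 * n + 2 : ℚ) * (2 * n + 3) * (2 * n + 4) * (2 * n + 5) * (2 * n + 6)) *
      ((2 * n + 3).choose (n - n)) * ((2 * n + 6).choose (n - n + 2)) = gQ n n := by
  unfold gQ
  rw [Nat.sub_self]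
  have hD : ((2 * (n : ℚ) + 2) * (2 * (n : ℚ) + 3) * (2 * (n : ℚ) + 4) * (2 * (n : ℚ) + 5) *
      (2 * (n : ℚ) + 6)) ≠ 0 := by positivity
  rw [div_mul_eq_mul_div, div_mul_eq_mul_div, div_mul_eq_mul_div, div_mul_eq_mul_div,
    div_eq_div_iff hD hD]
  ring

lemma lemC (n : ℕ) : gQ n 0 = (catalan (n + 1) : ℚ) * catalan (n + 2) := by
  unfold gQ
  rw [Nat.sub_zero]
  have p2 : ((n : ℚ) + 2) ≠ 0 := by positivity
  have p3 : ((n : ℚ) + 3) ≠ 0 := by positivity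
  have p4 : ((n : ℚ) + 4) ≠ 0 := by positivity
  -- catalan facts
  have f1 : ((n : ℚ) + 2) * catalan (n + 1) = (2 * n + 2).choose (n + 1) := by
    have t := succ_mul_catalan_eq_centralBinom (n + 1)
    rw [Nat.centralBinom] at t
    have e : 2 * (n + 1) = 2 * n + 2 := by omega
    rw [e] at t
    exact_mod_cast t
  have f2 : ((n : ℚ) + 3) * catalan (n + 2) = (2 * n + 4).choose (n + 2) := by
    have t := succ_mul_catalan_eq_centralBinom (n + 2)
    rw [Nat.centralBinom] at t
    have e : 2 * (n + 2) = 2 * n + 4 := by omega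
    rw [e] at t
    exact_mod_cast t
  have cat1 : (catalan (n + 1) : ℚ) = ((2 * n + 2).choose (n + 1)) / ((n : ℚ) + 2) := by
    field_simp
    linarith [f1]
  have cat2 : (catalan (n + 2) : ℚ) = ((2 * n + 4).choose (n + 2)) / ((n : ℚ) + 3) := by
    field_simp
    linarith [f2]
  -- choose chain for (2n+3).choose n
  have f4 : ((2 * (n : ℚ) + 3)) * ((2 * n + 2).choose (n + 1)) =
      ((2 * n + 3).choose (n + 2)) * ((n : ℚ) + 2) := by
    have t := Nat.add_one_mul_choose_eq (2 * n + 2) (n + 1)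
    have e : (2 * n + 2).succ = 2 * n + 3 := by omega
    have e' : 2 * n + 2 + 1 = 2 * n + 3 := by omega
    have e2 : n + 1 + 1 = n + 2 := by omega
    rw [e', e2] at t
    exact_mod_cast t
  have f5 : (2 * n + 3).choose (n + 1) = (2 * n + 3).choose (n + 2) := by
    have t := Nat.choose_symm (show n + 2 ≤ 2 * n + 3 by omega)
    have e : 2 * n + 3 - (n + 2) = n + 1 := by omega
    rw [e] at t
    exact t
  have f3 : (((2 * n + 3).choose (n + 1) : ℚ)) * ((n : ℚ) + 1) =
      ((2 * n + 3).choose n) * ((n : ℚ) + 3) := by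
    have t := Nat.choose_succ_right_eq (2 * n + 3) n
    have e : 2 * n + 3 - n = n + 3 := by omega
    rw [e] at t
    exact_mod_cast t
  have f8 : ((2 * (n : ℚ) + 5)) * ((2 * n + 4).choose (n + 2)) =
      ((2 * n + 5).choose (n + 3)) * ((n : ℚ) + 3) := by
    have t := Nat.add_one_mul_choose_eq (2 * n + 4) (n + 2)
    have e' : 2 * n + 4 + 1 = 2 * n + 5 := by omega
    have e2 : n + 2 + 1 = n + 3 := by omega
    rw [e', e2] at t
    exact_mod_cast t
  have f9 : (2 * n + 5).choose (n + 2) = (2 * n + 5).choose (n + 3) := by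
    have t := Nat.choose_symm (show n + 3 ≤ 2 * n + 5 by omega)
    have e : 2 * n + 5 - (n + 3) = n + 2 := by omega
    rw [e] at t
    exact t
  have f7 : ((2 * (n : ℚ) + 6)) * ((2 * n + 5).choose (n + 2)) =
      ((2 * n + 6).choose (n + 3)) * ((n : ℚ) + 3) := by
    have t := Nat.add_one_mul_choose_eq (2 * n + 5) (n + 2)
    have e' : 2 * n + 5 + 1 = 2 * n + 6 := by omega
    have e2 : n + 2 + 1 = n + 3 := by omega
    rw [e', e2] at t
    exact_mod_cast t
  have f6 : (((2 * n + 6).choose (n + 3) : ℚ)) * ((n : ℚ) + 3) =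
      ((2 * n + 6).choose (n + 2)) * ((n : ℚ) + 4) := by
    have t := Nat.choose_succ_right_eq (2 * n + 6) (n + 2)
    have e : 2 * n + 6 - (n + 2) = n + 4 := by omega
    have e2 : n + 2 + 1 = n + 3 := by omega
    rw [e, e2] at t
    exact_mod_cast t
  have f45 : (((2 * n + 3).choose (n + 1) : ℚ)) * ((n : ℚ) + 2) =
      (2 * (n : ℚ) + 3) * ((2 * n + 2).choose (n + 1)) := by
    rw [f5]; linear_combination -f4
  have gA : (((2 * n + 3).choose n : ℚ)) * (((n : ℚ) + 2) * ((n : ℚ) + 3)) =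
      (2 * (n : ℚ) + 3) * ((n : ℚ) + 1) * ((2 * n + 2).choose (n + 1)) := by
    linear_combination (-((n : ℚ) + 2)) * f3 + (((n : ℚ) + 1)) * f45
  have hA : (((2 * n + 3).choose n : ℚ)) =
      (2 * (n : ℚ) + 3) * ((n : ℚ) + 1) * ((2 * n + 2).choose (n + 1)) /
        (((n : ℚ) + 2) * ((n : ℚ) + 3)) := by
    field_simp
    linear_combination gA
  have g7 : ((2 * (n : ℚ) + 6)) * ((2 * n + 5).choose (n + 3)) =
      ((2 * n + 6).choose (n + 3)) * ((n : ℚ) + 3) := by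
    rw [← f9]; linear_combination f7
  have gB : (((2 * n + 6).choose (n + 2) : ℚ)) * (((n : ℚ) + 3) * ((n : ℚ) + 4)) =
      (2 * (n : ℚ) + 6) * (2 * (n : ℚ) + 5) * ((2 * n + 4).choose (n + 2)) := by
    linear_combination (-((n : ℚ) + 3)) * f6 + (-((n : ℚ) + 3)) * g7 + (-(2 * (n : ℚ) + 6)) * f8
  have hB : (((2 * n + 6).choose (n + 2) : ℚ)) =
      (2 * (n : ℚ) + 6) * (2 * (n : ℚ) + 5) * ((2 * n + 4).choose (n + 2)) /
        (((n : ℚ) + 3) * ((n : ℚ) + 4)) := by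
    field_simp
    linear_combination gB
  rw [hA, hB, cat1, cat2]
  have hD : ((2 * (n : ℚ) + 2) * (2 * (n : ℚ) + 3) * (2 * (n : ℚ) + 4) * (2 * (n : ℚ) + 5) *
      (2 * (n : ℚ) + 6)) ≠ 0 := by positivity
  push_cast
  field_simp
  ring

theorem stmt_6 (n : ℕ) :
    (catalan (n + 1) : ℚ) * catalan (n + 2) =
      ∑ k ∈ Finset.range (n + 1),
        ((2 * k + 2 : ℚ) * (2 * k + 4) * (8 * n * k + 6 * n + 14 * k + 12)) /
            ((2 * n + 2 : ℚ) * (2 * n + 3) * (2 * n + 4) * (2 * n + 5) * (2 * n + 6)) *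
          ((2 * n + 3).choose (n - k)) * ((2 * n + 6).choose (n - k + 2)) := by
  rw [Finset.sum_range_succ]
  rw [Finset.sum_congr rfl (fun k hk => lemA n k (Finset.mem_range.mp hk))]
  rw [Finset.sum_range_sub' (gQ n) n]
  rw [lemB n, ← lemC n]
  ring
end

section
/- For every nonnegative integer n, C_{n+1} * C_{n+2} = \sum_{k=0}^{n} (2k+2)(2k+4)(8nk+18n+14k+30) / ((2n+2)(2n+3)(2n+4)(2n+5)(2n+6)) * binom(2n+3, n-k) * binom(2n+6, n-k+1). -/
/-- Gosper-style certificate coefficient. -/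
noncomputable def A7 (n k : ℕ) : ℚ :=
  (8 * ((n ^ 3 + 12 * n ^ 2 + 47 * n + 60 + (7 * n ^ 2 + 56 * n + 107) * k +
        (2 * n ^ 2 + 27 * n + 74) * k ^ 2 + (4 * n + 21) * k ^ 3 + 2 * k ^ 4) / 2) *
      (4 * n * k + 9 * n + 7 * k + 15)) /
    (((4 * n + 7) * k + 9 * n + 15) *
      ((2 * n + 2) * (2 * n + 3) * (2 * n + 4) * (2 * n + 5) * (2 * n + 6)))

noncomputable def F7 (n k : ℕ) : ℚ :=
  A7 n k * ((2 * n + 3).choose (n - k)) * ((2 * n + 6).choose (n - k + 1))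

lemma l1 (n k : ℕ) (hk : k < n) :
    ((2 * k + 2 : ℚ) * (2 * k + 4) * (8 * n * k + 18 * n + 14 * k + 30)) /
        ((2 * n + 2 : ℚ) * (2 * n + 3) * (2 * n + 4) * (2 * n + 5) * (2 * n + 6)) *
      ((2 * n + 3).choose (n - k)) * ((2 * n + 6).choose (n - k + 1)) =
      F7 n k - F7 n (k + 1) := by
  set j := n - (k + 1) with hjdef
  have hj1 : n - k = j + 1 := by omega
  have hj2 : n - (k + 1) = j := rfl
  have r1 := Nat.choose_succ_right_eq (2 * n + 3) j
  have r2 := Nat.choose_succ_right_eq (2 * n + 6) (j + 1)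
  have e1 : 2 * n + 3 - j = n + k + 4 := by omega
  have e2 : 2 * n + 6 - (j + 1) = n + k + 6 := by omega
  rw [e1] at r1
  rw [e2] at r2
  have q1 : ((2 * n + 3).choose (j + 1) : ℚ) * (j + 1) =
      ((2 * n + 3).choose j : ℚ) * (n + k + 4) := by exact_mod_cast congrArg (Nat.cast (R := ℚ)) r1
  have q2 : ((2 * n + 6).choose (j + 1 + 1) : ℚ) * (j + 1 + 1) =
      ((2 * n + 6).choose (j + 1) : ℚ) * (n + k + 6) := by
    exact_mod_cast congrArg (Nat.cast (R := ℚ)) r2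
  have hjq : (j : ℚ) = n - k - 1 := by
    have : (j : ℚ) + (k : ℚ) + 1 = n := by exact_mod_cast congrArg (Nat.cast (R := ℚ)) (by omega : j + (k + 1) = n)
    linarith
  have h4 : ((n : ℚ) + k + 4) ≠ 0 := by positivity
  have h6 : ((n : ℚ) + k + 6) ≠ 0 := by positivity
  have b1 : ((2 * n + 3).choose j : ℚ) =
      ((2 * n + 3).choose (j + 1) : ℚ) * (j + 1) / (n + k + 4) := by
    field_simp; linarith [q1]
  have b2 : ((2 * n + 6).choose (j + 1) : ℚ) =
      ((2 * n + 6).choose (j + 1 + 1) : ℚ) * (j + 1 + 1) / (n + k + 6) := by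
    field_simp; linarith [q2]
  rw [F7, F7, A7, A7, hj1, hj2]
  rw [b1, b2, hjq]
  have d1 : ((4 * (n : ℚ) + 7) * k + 9 * n + 15) ≠ 0 := by positivity
  have d2 : ((4 * (n : ℚ) + 7) * (k + 1) + 9 * n + 15) ≠ 0 := by positivity
  have d3 : ((2 * (n : ℚ) + 2) * (2 * n + 3) * (2 * n + 4) * (2 * n + 5) * (2 * n + 6)) ≠ 0 := by
    positivity
  push_cast
  field_simp
  ring

lemma l2 (n : ℕ) :
    ((2 * n + 2 : ℚ) * (2 * n + 4) * (8 * n * n + 18 * n + 14 * n + 30)) /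
        ((2 * n + 2 : ℚ) * (2 * n + 3) * (2 * n + 4) * (2 * n + 5) * (2 * n + 6)) *
      ((2 * n + 3).choose (n - n)) * ((2 * n + 6).choose (n - n + 1)) = F7 n n := by
  rw [F7, A7, Nat.sub_self]
  simp only [Nat.choose_zero_right, Nat.choose_one_right]
  have d1 : ((4 * (n : ℚ) + 7) * n + 9 * n + 15) ≠ 0 := by positivity
  have d3 : ((2 * (n : ℚ) + 2) * (2 * n + 3) * (2 * n + 4) * (2 * n + 5) * (2 * n + 6)) ≠ 0 := by
    positivity
  push_cast
  field_simp
  ring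

lemma l3 (n : ℕ) : F7 n 0 = (catalan (n + 1) : ℚ) * catalan (n + 2) := by
  have qa : (catalan (n + 1) : ℚ) = ((2 * n + 2).choose (n + 1) : ℚ) / (n + 2) := by
    have h := succ_mul_catalan_eq_centralBinom (n + 1)
    rw [Nat.centralBinom] at h
    have e : 2 * (n + 1) = 2 * n + 2 := by omega
    rw [e] at h
    have hq := congrArg (Nat.cast (R := ℚ)) h; push_cast at hq
    have : ((n : ℚ) + 2) ≠ 0 := by positivity
    field_simp
    linarith
  have qb : (catalan (n + 2) : ℚ) = ((2 * n + 4).choose (n + 2) : ℚ) / (n + 3) := by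
    have h := succ_mul_catalan_eq_centralBinom (n + 2)
    rw [Nat.centralBinom] at h
    have e : 2 * (n + 2) = 2 * n + 4 := by omega
    rw [e] at h
    have hq := congrArg (Nat.cast (R := ℚ)) h; push_cast at hq
    have : ((n : ℚ) + 3) ≠ 0 := by positivity
    field_simp
    linarith
  have qc0 : ((2 * n + 2).choose n : ℚ) = ((2 * n + 2).choose (n + 1) : ℚ) * (n + 1) / (n + 2) := by
    have h := Nat.choose_succ_right_eq (2 * n + 2) n
    have e : 2 * n + 2 - n = n + 2 := by omega
    rw [e] at h
    have hq := congrArg (Nat.cast (R := ℚ)) h; push_cast at hq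
    have : ((n : ℚ) + 2) ≠ 0 := by positivity
    field_simp
    linarith
  have qc1 : ((2 * n + 3).choose (n + 1) : ℚ) = (2 * n + 3) * ((2 * n + 2).choose n : ℚ) / (n + 1) := by
    have h := Nat.add_one_mul_choose_eq (2 * n + 2) n
    have hq := congrArg (Nat.cast (R := ℚ)) h; push_cast at hq
    have : ((n : ℚ) + 1) ≠ 0 := by positivity
    field_simp
    linarith
  have qc2 : ((2 * n + 3).choose n : ℚ) = ((2 * n + 3).choose (n + 1) : ℚ) * (n + 1) / (n + 3) := by
    have h := Nat.choose_succ_right_eq (2 * n + 3) n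
    have e : 2 * n + 3 - n = n + 3 := by omega
    rw [e] at h
    have hq := congrArg (Nat.cast (R := ℚ)) h; push_cast at hq
    have : ((n : ℚ) + 3) ≠ 0 := by positivity
    field_simp
    linarith
  have qd1 : ((2 * n + 5).choose (n + 3) : ℚ) = (2 * n + 5) * ((2 * n + 4).choose (n + 2) : ℚ) / (n + 3) := by
    have h := Nat.add_one_mul_choose_eq (2 * n + 4) (n + 2)
    have hq := congrArg (Nat.cast (R := ℚ)) h; push_cast at hq
    have : ((n : ℚ) + 3) ≠ 0 := by positivity
    field_simp
    linarith
  have qd2 : ((2 * n + 6).choose (n + 4) : ℚ) = (2 * n + 6) * ((2 * n + 5).choose (n + 3) : ℚ) / (n + 4) := by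
    have h := Nat.add_one_mul_choose_eq (2 * n + 5) (n + 3)
    have hq := congrArg (Nat.cast (R := ℚ)) h; push_cast at hq
    have : ((n : ℚ) + 4) ≠ 0 := by positivity
    field_simp
    linarith
  have qd3 : ((2 * n + 6).choose (n + 2) : ℚ) = ((2 * n + 6).choose (n + 4) : ℚ) := by
    have h := Nat.choose_symm (show n + 2 ≤ 2 * n + 6 by omega)
    have e : 2 * n + 6 - (n + 2) = n + 4 := by omega
    rw [e] at h
    exact_mod_cast (congrArg (Nat.cast (R := ℚ)) h).symm
  have qd4 : ((2 * n + 6).choose (n + 1) : ℚ) = ((2 * n + 6).choose (n + 2) : ℚ) * (n + 2) / (n + 5) := by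
    have h := Nat.choose_succ_right_eq (2 * n + 6) (n + 1)
    have e : 2 * n + 6 - (n + 1) = n + 5 := by omega
    rw [e] at h
    have hq := congrArg (Nat.cast (R := ℚ)) h; push_cast at hq
    have : ((n : ℚ) + 5) ≠ 0 := by positivity
    field_simp
    linarith
  rw [F7, A7, Nat.sub_zero, qa, qb, qc2, qc1, qc0, qd4, qd3, qd2, qd1]
  have d1 : ((4 * (n : ℚ) + 7) * 0 + 9 * n + 15) ≠ 0 := by positivity
  have d3 : ((2 * (n : ℚ) + 2) * (2 * n + 3) * (2 * n + 4) * (2 * n + 5) * (2 * n + 6)) ≠ 0 := by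
    positivity
  push_cast
  field_simp
  ring

theorem stmt_7 (n : ℕ) :
    (catalan (n + 1) : ℚ) * catalan (n + 2) =
      ∑ k ∈ Finset.range (n + 1),
        ((2 * k + 2 : ℚ) * (2 * k + 4) * (8 * n * k + 18 * n + 14 * k + 30)) /
            ((2 * n + 2 : ℚ) * (2 * n + 3) * (2 * n + 4) * (2 * n + 5) * (2 * n + 6)) *
          ((2 * n + 3).choose (n - k)) * ((2 * n + 6).choose (n - k + 1)) := by
  rw [Finset.sum_range_succ]
  rw [Finset.sum_congr rfl (fun k hk => l1 n k (Finset.mem_range.mp hk))]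
  rw [Finset.sum_range_sub' (fun k => F7 n k), l2, l3]
  ring
end

section
/- For every nonnegative integer n, binom(2n+1,n) * C_{n+1} = \sum_{k=0}^{n} (2k+2) / ((2n+2)(2n+3)) * binom(2n+3, n-k) * binom(2n+3, n-k+1). -/
/-!
With `N = 2n + 3` and `j = n - k`, the weight `2k + 2` becomes `N - 1 - 2j`, and
`N (N - 1 - 2j) C(N, j) C(N, j + 1) = f (j + 1) - f j` for `f j = j (j + 1) C(N, j) C(N, j + 1)`,
by `(j + 1) C(N, j + 1) = (N - j) C(N, j)`. So the sum telescopes to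
`(n + 1)(n + 2) C(2n + 3, n + 1)² / (2n + 3)`, and both sides reduce to `B² / (2(n + 2))` with
`B = C(2n + 2, n + 1)`, since `C(2n + 1, n) = B / 2`, `C_{n+1} = B / (n + 2)` and
`C(2n + 3, n + 1) = (2n + 3) B / (n + 2)`.
-/

open Finset

namespace Nat

theorem cast_choose_succ_mul {R : Type*} [CommRing R] (N j : ℕ) :
    (N.choose (j + 1) : R) * (j + 1) = N.choose j * (N - j) := by
  rcases le_or_gt j N with hj | hj
  · simpa [Nat.cast_sub hj] using congrArg (Nat.cast (R := R)) (choose_succ_right_eq N j)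
  · simp [choose_eq_zero_of_lt hj, choose_eq_zero_of_lt (hj.trans (lt_succ_self j))]

theorem mul_sum_range_sub_mul_choose_mul_choose {R : Type*} [CommRing R] (N m : ℕ) :
    (N : R) * ∑ j ∈ range m, ((N : R) - 1 - 2 * j) * N.choose j * N.choose (j + 1) =
      m * (m + 1) * N.choose m * N.choose (m + 1) := by
  induction m with
  | zero => simp
  | succ m ih =>
    have h₁ := cast_choose_succ_mul (R := R) N m
    have h₂ := cast_choose_succ_mul (R := R) N (m + 1)
    rw [sum_range_succ, mul_add, ih]
    push_cast at h₂ ⊢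
    linear_combination
      -((m : R) + 1) * N.choose (m + 1) * h₂ - ((N : R) - m - 1) * N.choose (m + 1) * h₁

theorem two_mul_choose_eq_centralBinom_succ (n : ℕ) :
    2 * (2 * n + 1).choose n = centralBinom (n + 1) := by
  rw [centralBinom_eq_two_mul_choose, show 2 * (n + 1) = 2 * n + 1 + 1 by ring,
    choose_succ_succ', choose_symm_half]
  ring

theorem add_two_mul_choose_eq_mul_centralBinom_succ (n : ℕ) :
    (n + 2) * (2 * n + 3).choose (n + 1) = (2 * n + 3) * centralBinom (n + 1) := by
  have h : (2 * n + 3) * (2 * n + 2).choose (n + 1) = (2 * n + 3).choose (n + 2) * (n + 2) :=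
    add_one_mul_choose_eq (2 * n + 2) (n + 1)
  rw [choose_symm_of_eq_add (by ring : 2 * n + 3 = (n + 2) + (n + 1))] at h
  rw [centralBinom_eq_two_mul_choose, show 2 * (n + 1) = 2 * n + 2 by ring, h, mul_comm]

theorem sum_range_mul_choose_mul_choose {R : Type*} [CommRing R] (n : ℕ) :
    (2 * n + 3 : R) * ∑ k ∈ range (n + 1),
        (2 * k + 2 : R) * (2 * n + 3).choose (n - k) * (2 * n + 3).choose (n - k + 1) =
      (n + 1) * (n + 2) * (2 * n + 3).choose (n + 1) ^ 2 := by
  have hsymm : (2 * n + 3).choose (n + 1 + 1) = (2 * n + 3).choose (n + 1) :=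
    choose_symm_of_eq_add (by ring)
  calc (2 * n + 3 : R) * ∑ k ∈ range (n + 1),
        (2 * k + 2 : R) * (2 * n + 3).choose (n - k) * (2 * n + 3).choose (n - k + 1)
      = ((2 * n + 3 : ℕ) : R) * ∑ j ∈ range (n + 1), (((2 * n + 3 : ℕ) : R) - 1 - 2 * j) *
          (2 * n + 3).choose j * (2 * n + 3).choose (j + 1) := by
        rw [← sum_range_reflect]
        push_cast
        refine congrArg _ (sum_congr rfl fun j hj => ?_)
        have hjn : j ≤ n := Nat.lt_succ_iff.mp (mem_range.mp hj)
        rw [Nat.sub_sub_self hjn, Nat.cast_sub hjn]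
        ring
    _ = (n + 1) * (n + 2) * (2 * n + 3).choose (n + 1) ^ 2 := by
        rw [mul_sum_range_sub_mul_choose_mul_choose, hsymm]
        push_cast
        ring

end Nat

theorem stmt_8 (n : ℕ) :
    ((2 * n + 1).choose n : ℚ) * catalan (n + 1) =
      ∑ k ∈ Finset.range (n + 1),
        (2 * k + 2 : ℚ) / ((2 * n + 2 : ℚ) * (2 * n + 3)) *
          ((2 * n + 3).choose (n - k)) * ((2 * n + 3).choose (n - k + 1)) := by
  have hsum := Nat.sum_range_mul_choose_mul_choose (R := ℚ) n
  have h₁ : ((2 * n + 1).choose n : ℚ) = (n + 1).centralBinom / 2 := by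
    rw [eq_div_iff two_ne_zero, mul_comm]
    exact_mod_cast Nat.two_mul_choose_eq_centralBinom_succ n
  have h₂ : ((2 * n + 3).choose (n + 1) : ℚ) = (2 * n + 3) * (n + 1).centralBinom / (n + 2) := by
    rw [eq_div_iff (by positivity), mul_comm]
    exact_mod_cast Nat.add_two_mul_choose_eq_mul_centralBinom_succ n
  have h₃ : (catalan (n + 1) : ℚ) = (n + 1).centralBinom / (n + 2) := by
    rw [eq_div_iff (by positivity), mul_comm]
    exact_mod_cast succ_mul_catalan_eq_centralBinom (n + 1)
  rw [mul_comm, ← eq_div_iff (by positivity), h₂] at hsum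
  calc ((2 * n + 1).choose n : ℚ) * catalan (n + 1)
      = (∑ k ∈ range (n + 1), (2 * k + 2 : ℚ) * (2 * n + 3).choose (n - k) *
          (2 * n + 3).choose (n - k + 1)) / ((2 * n + 2) * (2 * n + 3)) := by
        rw [hsum, h₁, h₃]
        field_simp
    _ = _ := by
        rw [sum_div]
        exact sum_congr rfl fun k _ => by ring
end

section
/- For every nonnegative integer n, binom(2n+3,n+1) * C_{n+1} = \sum_{k=0}^{n} (8nk+6n+14k+12) / ((2n+2)(2n+3)(2n+4)) * binom(2n+3, n-k) * binom(2n+4, n-k+2). -/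
theorem stmt_9 (n : ℕ) :
    ((2 * n + 3).choose (n + 1) : ℚ) * catalan (n + 1) =
      ∑ k ∈ Finset.range (n + 1),
        (8 * n * k + 6 * n + 14 * k + 12 : ℚ) /
            ((2 * n + 2 : ℚ) * (2 * n + 3) * (2 * n + 4)) *
          ((2 * n + 3).choose (n - k)) * ((2 * n + 4).choose (n - k + 2)) := by
  have hD : ((2 * n + 2 : ℚ) * (2 * n + 3) * (2 * n + 4)) ≠ 0 := by positivity
  set f : ℕ → ℚ := fun k =>
    2 * (k + n + 2) * (k + n + 3) * ((2 * n + 3).choose (n + 3 + k)) *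
      ((2 * n + 4).choose (n + 2 + k)) / ((2 * n + 2 : ℚ) * (2 * n + 3) * (2 * n + 4))
    with hf
  have key : ∀ k ∈ Finset.range (n + 1),
      (8 * n * k + 6 * n + 14 * k + 12 : ℚ) /
            ((2 * n + 2 : ℚ) * (2 * n + 3) * (2 * n + 4)) *
          ((2 * n + 3).choose (n - k)) * ((2 * n + 4).choose (n - k + 2)) = f k - f (k + 1) := by
    intro k hk
    rw [Finset.mem_range] at hk
    have hk' : k ≤ n := by omega
    have hAs : (2 * n + 3).choose (n - k) = (2 * n + 3).choose (n + 3 + k) := by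
      have h0 : n - k = 2 * n + 3 - (n + 3 + k) := by omega
      rw [h0, Nat.choose_symm (by omega)]
    have hBs : (2 * n + 4).choose (n - k + 2) = (2 * n + 4).choose (n + 2 + k) := by
      have h0 : n - k + 2 = 2 * n + 4 - (n + 2 + k) := by omega
      rw [h0, Nat.choose_symm (by omega)]
    have hne1 : ((n : ℚ) + 3 + (k + 1)) ≠ 0 := by positivity
    have hne2 : ((n : ℚ) + 2 + (k + 1)) ≠ 0 := by positivity
    have rA : ((2 * n + 3).choose (n + 3 + (k + 1)) : ℚ) =
        ((2 * n + 3).choose (n + 3 + k) : ℚ) * ((n : ℚ) - k) / ((n : ℚ) + 3 + (k + 1)) := by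
      rw [eq_div_iff hne1]
      have h := Nat.choose_succ_right_eq (2 * n + 3) (n + 3 + k)
      have h2 : n + 3 + k + 1 = n + 3 + (k + 1) := by omega
      have h3 : 2 * n + 3 - (n + 3 + k) = n - k := by omega
      rw [h2, h3] at h
      have h4 := congrArg (Nat.cast : ℕ → ℚ) h
      push_cast [Nat.cast_sub hk'] at h4
      linear_combination h4
    have rB : ((2 * n + 4).choose (n + 2 + (k + 1)) : ℚ) =
        ((2 * n + 4).choose (n + 2 + k) : ℚ) * ((n : ℚ) - k + 2) / ((n : ℚ) + 2 + (k + 1)) := by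
      rw [eq_div_iff hne2]
      have h := Nat.choose_succ_right_eq (2 * n + 4) (n + 2 + k)
      have h2 : n + 2 + k + 1 = n + 2 + (k + 1) := by omega
      have h3 : 2 * n + 4 - (n + 2 + k) = n - k + 2 := by omega
      rw [h2, h3] at h
      have h4 := congrArg (Nat.cast : ℕ → ℚ) h
      push_cast [Nat.cast_sub hk'] at h4
      linear_combination h4
    rw [hAs, hBs]
    simp only [hf]
    rw [rA, rB]
    push_cast
    field_simp
    ring
  rw [Finset.sum_congr rfl key, Finset.sum_range_sub' f (n + 1)]
  have hfn : f (n + 1) = 0 := by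
    simp only [hf]
    rw [Nat.choose_eq_zero_of_lt (by omega)]
    simp
  rw [hfn, sub_zero]
  simp only [hf]
  -- evaluate f 0 and LHS via the central binomial coefficient d = C(2n+2, n)
  have hb : ((2 * n + 3).choose (n + 3 + 0)) = ((2 * n + 3).choose n) := by
    norm_num
    rw [show n + 3 = 2 * n + 3 - n by omega, Nat.choose_symm (by omega)]
  rw [hb]
  have hd1 : ((n : ℚ) + 1) ≠ 0 := by positivity
  have hd2 : ((n : ℚ) + 2) ≠ 0 := by positivity
  have hd3 : ((n : ℚ) + 3) ≠ 0 := by positivity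
  -- relations
  have r2 := congrArg (Nat.cast : ℕ → ℚ) (Nat.add_one_mul_choose_eq (2 * n + 2) n)
  -- (2n+3) * C(2n+2, n) = C(2n+3, n+1) * (n+1)
  have r3 := congrArg (Nat.cast : ℕ → ℚ) (Nat.choose_succ_right_eq (2 * n + 2) n)
  have r4 := congrArg (Nat.cast : ℕ → ℚ) (Nat.choose_succ_right_eq (2 * n + 3) n)
  have r1 := congrArg (Nat.cast : ℕ → ℚ) (succ_mul_catalan_eq_centralBinom (n + 1))
  have r6 := congrArg (Nat.cast : ℕ → ℚ) (Nat.succ_mul_centralBinom_succ (n + 1))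
  rw [show 2 * n + 2 - n = n + 2 by omega] at r3
  rw [show 2 * n + 3 - n = n + 3 by omega] at r4
  simp only [Nat.centralBinom, show 2 * (n + 1) = 2 * n + 2 by ring,
    show 2 * (n + 1 + 1) = 2 * n + 4 by ring] at r1 r6
  push_cast at r2 r3 r4 r1 r6 ⊢
  set d : ℚ := ((2 * n + 2).choose n : ℚ)
  set c : ℚ := ((2 * n + 2).choose (n + 1) : ℚ)
  set a : ℚ := ((2 * n + 3).choose (n + 1) : ℚ)
  set b : ℚ := ((2 * n + 3).choose n : ℚ)
  set e : ℚ := ((2 * n + 4).choose (n + 2) : ℚ)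
  set g : ℚ := (catalan (n + 1) : ℚ)
  -- a = (2n+3)d/(n+1), c = d(n+2)/(n+1), g = d/(n+1), b = (2n+3)d/(n+3), e = 2(2n+3)d/(n+1)
  have ha : a = (2 * n + 3) * d / (n + 1) := by rw [eq_div_iff hd1]; linear_combination -r2
  have hc : c = d * (n + 2) / (n + 1) := by rw [eq_div_iff hd1]; linear_combination r3
  have hg : g = d / (n + 1) := by
    rw [eq_div_iff hd1]
    have h2 : ((n : ℚ) + 2) * (g * ((n : ℚ) + 1)) = ((n : ℚ) + 2) * d := by
      linear_combination ((n : ℚ) + 1) * r1 + r3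
    exact mul_left_cancel₀ hd2 h2
  have hbb : b = (2 * n + 3) * d / (n + 3) := by
    rw [eq_div_iff hd3]
    linear_combination -r2 - r4
  have he : e = 2 * (2 * n + 3) * d / (n + 1) := by
    rw [eq_div_iff hd1]
    have h2 : ((n : ℚ) + 2) * (e * ((n : ℚ) + 1)) = ((n : ℚ) + 2) * (2 * (2 * (n : ℚ) + 3) * d) := by
      linear_combination ((n : ℚ) + 1) * r6 + 2 * (2 * (n : ℚ) + 3) * r3
    exact mul_left_cancel₀ hd2 h2
  rw [ha, hg, hbb, he]
  field_simp
  ring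
end

section
/- For every nonnegative integer m, C_m^2 = \sum_{k=0}^{m} (2k+2)((2k+1)(2k+3)-(2m+1)) / ((2m+1)(2m+2)^2) * binom(2m+2, m-k)^2. (Note the summand can be negative for small k.) -/
theorem stmt_11 (m : ℕ) :
    (catalan m : ℚ) ^ 2 =
      ∑ k ∈ Finset.range (m + 1),
        (2 * k + 2 : ℚ) * ((2 * k + 1) * (2 * k + 3) - (2 * m + 1)) /
            ((2 * m + 1 : ℚ) * (2 * m + 2) ^ 2) *
          ((2 * m + 2).choose (m - k) : ℚ) ^ 2 := by
  set H : ℕ → ℚ := fun k =>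
    (((m + 1 - k : ℕ) : ℚ) * (2 * k + 1) * ((2 * m + 2).choose (m + 1 - k) : ℚ)) ^ 2 /
      ((2 * m + 1) ^ 2 * (2 * m + 2) ^ 2) with hH
  have h21 : (2 * (m : ℚ) + 1) ≠ 0 := by positivity
  have h22 : (2 * (m : ℚ) + 2) ≠ 0 := by positivity
  have hterm : ∀ k ∈ Finset.range (m + 1),
      (2 * k + 2 : ℚ) * ((2 * k + 1) * (2 * k + 3) - (2 * m + 1)) /
            ((2 * m + 1 : ℚ) * (2 * m + 2) ^ 2) *
          ((2 * m + 2).choose (m - k) : ℚ) ^ 2 = H k - H (k + 1) := by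
    intro k hk
    have hkm : k ≤ m := Nat.lt_succ_iff.mp (Finset.mem_range.mp hk)
    have h1 : m + 1 - k = (m - k) + 1 := by omega
    have h2 : m + 1 - (k + 1) = m - k := by omega
    have hchoose : ((2 * m + 2).choose ((m - k) + 1)) * ((m - k) + 1) =
        ((2 * m + 2).choose (m - k)) * (2 * m + 2 - (m - k)) :=
      Nat.choose_succ_right_eq _ _
    have h3 : 2 * m + 2 - (m - k) = m + k + 2 := by omega
    rw [h3] at hchoose
    have hchooseQ : ((2 * m + 2).choose ((m - k) + 1) : ℚ) * (((m - k : ℕ) : ℚ) + 1) =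
        ((2 * m + 2).choose (m - k) : ℚ) * ((m : ℚ) + (k : ℚ) + 2) := by
      exact_mod_cast hchoose
    have hsub : ((m - k : ℕ) : ℚ) = (m : ℚ) - (k : ℚ) := by
      push_cast [Nat.cast_sub hkm]; ring
    rw [hH]
    simp only [h1, h2]
    rw [hsub] at hchooseQ
    push_cast
    rw [hsub]
    set c : ℚ := ((2 * m + 2).choose (m - k) : ℚ)
    set c1 : ℚ := ((2 * m + 2).choose ((m - k) + 1) : ℚ)
    have key : ((m : ℚ) - k + 1) * (2 * k + 1) * c1 = ((m : ℚ) + k + 2) * (2 * k + 1) * c := by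
      have : c1 * ((m : ℚ) - k + 1) = c * ((m : ℚ) + k + 2) := hchooseQ
      nlinarith [this]
    rw [show ((m : ℚ) - ↑k + 1) * (2 * ↑k + 1) * c1 = ((m : ℚ) + k + 2) * (2 * k + 1) * c
        from key]
    field_simp
    ring
  rw [Finset.sum_congr rfl hterm, Finset.sum_range_sub' H]
  have hH0 : H (m + 1) = 0 := by
    rw [hH]; simp
  rw [hH0, sub_zero, hH]
  simp only [Nat.sub_zero, Nat.cast_ofNat]
  have hc : (m + 1) * ((2 * m + 2).choose (m + 1)) = 2 * (2 * m + 1) * ((m + 1) * catalan m) := by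
    have h1 : (m + 1) * catalan m = m.centralBinom := succ_mul_catalan_eq_centralBinom m
    have h2 : (m + 1) * Nat.centralBinom (m + 1) = 2 * (2 * m + 1) * m.centralBinom :=
      Nat.succ_mul_centralBinom_succ m
    have h3 : (2 * m + 2).choose (m + 1) = Nat.centralBinom (m + 1) := by
      rw [Nat.centralBinom]; ring_nf
    rw [h3, h2, h1]
  have hcQ : ((m : ℚ) + 1) * ((2 * m + 2).choose (m + 1) : ℚ) =
      2 * (2 * m + 1) * (((m : ℚ) + 1) * (catalan m : ℚ)) := by exact_mod_cast hc
  have hm1 : ((m : ℚ) + 1) ≠ 0 := by positivity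
  have : ((2 * m + 2).choose (m + 1) : ℚ) =
      2 * (2 * m + 1) * (catalan m : ℚ) := by
    field_simp at hcQ
    nlinarith [hcQ]
  rw [this]
  push_cast
  field_simp
  ring
end

section
/- For all integers n >= l >= 0, (1/(n+1))*binom(2n+2, n-l)*C_n = \sum_{k=0}^{n-l} (2k+1)(2k+l+2)(2k+2l+3) / ((2n+1)(2n+2)(2n+3)^2) * binom(2n+3, n-k-l) * binom(2n+3, n-k+1). -/
theorem stmt_12 (n l : ℕ) (h : l ≤ n) :
    (1 / (n + 1 : ℚ)) * ((2 * n + 2).choose (n - l)) * catalan n =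
      ∑ k ∈ Finset.range (n - l + 1),
        ((2 * k + 1 : ℚ) * (2 * k + l + 2) * (2 * k + 2 * l + 3)) /
            ((2 * n + 1 : ℚ) * (2 * n + 2) * (2 * n + 3) ^ 2) *
          ((2 * n + 3).choose (n - k - l)) * ((2 * n + 3).choose (n - k + 1)) := by
  have hn1 : ((n : ℚ) + 1) ≠ 0 := by positivity
  have hD : ((2 * n + 1 : ℚ) * (2 * n + 2) * (2 * n + 3) ^ 2) ≠ 0 := by positivity
  have hcl : ((n - l : ℕ) : ℚ) = (n : ℚ) - l := by
    push_cast [Nat.cast_sub h]; ring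
  -- the telescoping certificate
  set f : ℕ → ℚ := fun k =>
    ((n : ℚ) - l + 1 - k) *
      (((n : ℚ) + 1) * ((n : ℚ) + 2) + (2 * ((n : ℚ) + 2) * l + n + 3) * k +
        2 * ((n : ℚ) + 1 - l) * k ^ 2 - 2 * k ^ 3) *
      ((2 * n + 3).choose (n + 1 - k - l)) * ((2 * n + 3).choose (n + 2 - k)) with hf
  have key : ∀ k ∈ Finset.range (n - l + 1),
      ((n : ℚ) + 1) * ((2 * n + 1) * (2 * n + 2) * (2 * n + 3) ^ 2) *
        (((2 * k + 1 : ℚ) * (2 * k + l + 2) * (2 * k + 2 * l + 3)) /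
            ((2 * n + 1 : ℚ) * (2 * n + 2) * (2 * n + 3) ^ 2) *
          ((2 * n + 3).choose (n - k - l)) * ((2 * n + 3).choose (n - k + 1)))
        = f k - f (k + 1) := by
    intro k hk
    rw [Finset.mem_range] at hk
    have hkn : k + l ≤ n := by omega
    have hckl : ((n - k - l : ℕ) : ℚ) = (n : ℚ) - k - l := by
      have h1 : n - k - l = n - (k + l) := by omega
      rw [h1, Nat.cast_sub hkn]; push_cast; ring
    have hck : ((n - k : ℕ) : ℚ) = (n : ℚ) - k := by
      rw [Nat.cast_sub (by omega : k ≤ n)]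
    -- ratio lemmas
    have r1 : ((2 * n + 3).choose (n + 1 - k - l) : ℚ) * ((n : ℚ) - k - l + 1)
        = ((2 * n + 3).choose (n - k - l) : ℚ) * ((n : ℚ) + k + l + 3) := by
      have t := Nat.choose_succ_right_eq (2 * n + 3) (n - k - l)
      have ha : n + 1 - k - l = n - k - l + 1 := by omega
      have hb : 2 * n + 3 - (n - k - l) = n + k + l + 3 := by omega
      rw [hb] at t
      rw [ha]
      have t2 := congrArg (fun x : ℕ => (x : ℚ)) t
      push_cast at t2
      rw [hckl] at t2
      linear_combination t2
    have r2 : ((2 * n + 3).choose (n + 2 - k) : ℚ) * ((n : ℚ) - k + 2)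
        = ((2 * n + 3).choose (n - k + 1) : ℚ) * ((n : ℚ) + k + 2) := by
      have t := Nat.choose_succ_right_eq (2 * n + 3) (n - k + 1)
      have ha : n + 2 - k = n - k + 1 + 1 := by omega
      have hb : 2 * n + 3 - (n - k + 1) = n + k + 2 := by omega
      rw [hb] at t
      rw [ha]
      have t2 := congrArg (fun x : ℕ => (x : ℚ)) t
      push_cast at t2
      rw [hck] at t2
      linear_combination t2
    -- rewrite f (k+1) binomial arguments
    have ha1 : n + 1 - (k + 1) - l = n - k - l := by omega
    have ha2 : n + 2 - (k + 1) = n - k + 1 := by omega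
    have hfk1 : f (k + 1) =
        ((n : ℚ) - l + 1 - (k + 1)) *
          (((n : ℚ) + 1) * ((n : ℚ) + 2) + (2 * ((n : ℚ) + 2) * l + n + 3) * (k + 1) +
            2 * ((n : ℚ) + 1 - l) * ((k : ℚ) + 1) ^ 2 - 2 * ((k : ℚ) + 1) ^ 3) *
          ((2 * n + 3).choose (n - k - l)) * ((2 * n + 3).choose (n - k + 1)) := by
      simp only [hf, ha1, ha2]
      push_cast
      ring
    have hfk : f k =
        ((n : ℚ) - l + 1 - k) *
          (((n : ℚ) + 1) * ((n : ℚ) + 2) + (2 * ((n : ℚ) + 2) * l + n + 3) * k +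
            2 * ((n : ℚ) + 1 - l) * (k : ℚ) ^ 2 - 2 * (k : ℚ) ^ 3) *
          ((2 * n + 3).choose (n + 1 - k - l)) * ((2 * n + 3).choose (n + 2 - k)) := rfl
    rw [hfk, hfk1]
    have hexp : ((n : ℚ) + 1) * ((2 * n + 1) * (2 * n + 2) * (2 * n + 3) ^ 2) *
        (((2 * k + 1 : ℚ) * (2 * k + l + 2) * (2 * k + 2 * l + 3)) /
            ((2 * n + 1 : ℚ) * (2 * n + 2) * (2 * n + 3) ^ 2) *
          ((2 * n + 3).choose (n - k - l)) * ((2 * n + 3).choose (n - k + 1)))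
        = ((n : ℚ) + 1) * ((2 * k + 1 : ℚ) * (2 * k + l + 2) * (2 * k + 2 * l + 3)) *
          ((2 * n + 3).choose (n - k - l)) * ((2 * n + 3).choose (n - k + 1)) := by
      field_simp
    rw [hexp]
    -- scaled identity, then cancel the nonzero factor
    have hpos : ((n : ℚ) - k - l + 1) * ((n : ℚ) - k + 2) ≠ 0 := by
      have h1 : (0 : ℚ) < (n : ℚ) - k - l + 1 := by
        rw [← hckl]; positivity
      have h2 : (0 : ℚ) < (n : ℚ) - k + 2 := by
        rw [← hck]; positivity
      positivity
    apply mul_left_cancel₀ hpos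
    linear_combination
      (-(((n : ℚ) - l + 1 - k) * (((n : ℚ) + 1) * ((n : ℚ) + 2) +
          (2 * ((n : ℚ) + 2) * l + n + 3) * k + 2 * ((n : ℚ) + 1 - l) * (k : ℚ) ^ 2 -
          2 * (k : ℚ) ^ 3) * ((n : ℚ) - k + 2) *
          ((2 * n + 3).choose (n + 2 - k) : ℚ))) * r1 +
      (-(((n : ℚ) - l + 1 - k) * (((n : ℚ) + 1) * ((n : ℚ) + 2) +
          (2 * ((n : ℚ) + 2) * l + n + 3) * k + 2 * ((n : ℚ) + 1 - l) * (k : ℚ) ^ 2 -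
          2 * (k : ℚ) ^ 3) * ((n : ℚ) + k + l + 3) *
          ((2 * n + 3).choose (n - k - l) : ℚ))) * r2
  -- sum the telescoping identity
  have hsum : ((n : ℚ) + 1) * ((2 * n + 1) * (2 * n + 2) * (2 * n + 3) ^ 2) *
      (∑ k ∈ Finset.range (n - l + 1),
        ((2 * k + 1 : ℚ) * (2 * k + l + 2) * (2 * k + 2 * l + 3)) /
            ((2 * n + 1 : ℚ) * (2 * n + 2) * (2 * n + 3) ^ 2) *
          ((2 * n + 3).choose (n - k - l)) * ((2 * n + 3).choose (n - k + 1)))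
      = f 0 - f (n - l + 1) := by
    rw [Finset.mul_sum, Finset.sum_congr rfl key, Finset.sum_range_sub' f]
  have htop : f (n - l + 1) = 0 := by
    have : ((n : ℚ) - l + 1 - ((n - l : ℕ) + 1 : ℕ)) = 0 := by
      push_cast [hcl]; ring
    simp only [hf]
    rw [this]  -- may need adjusting
    ring
  -- closed form for f 0
  have hA1q : ((n : ℚ) - l + 1) * ((2 * n + 3).choose (n + 1 - l) : ℚ)
      = (2 * n + 3) * ((2 * n + 2).choose (n - l) : ℚ) := by
    have t := Nat.add_one_mul_choose_eq (2 * n + 2) (n - l)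
    have ha : n + 1 - l = n - l + 1 := by omega
    rw [ha]
    have hb : 2 * n + 2 + 1 = 2 * n + 3 := by omega
    simp only [Nat.succ_eq_add_one, hb] at t
    have t2 := congrArg (fun x : ℕ => (x : ℚ)) t
    push_cast at t2
    rw [hcl] at t2
    linear_combination -t2
  have hB1q : ((n : ℚ) + 2) * ((n : ℚ) + 1) * ((2 * n + 3).choose (n + 2) : ℚ)
      = (2 * n + 3) * (2 * n + 2) * (2 * n + 1) * (catalan n : ℚ) := by
    have t2 := Nat.add_one_mul_choose_eq (2 * n + 2) (n + 1)
    have t3 := Nat.add_one_mul_choose_eq (2 * n + 1) n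
    have t4 := Nat.add_one_mul_choose_eq (2 * n) n
    have tsym := Nat.choose_symm_half n
    have t5 := succ_mul_catalan_eq_centralBinom n
    rw [Nat.centralBinom_eq_two_mul_choose] at t5
    have e1 : 2 * n + 2 + 1 = 2 * n + 3 := by omega
    have e2 : n + 1 + 1 = n + 2 := by omega
    have e3 : 2 * n + 1 + 1 = 2 * n + 2 := by omega
    simp only [Nat.succ_eq_add_one, e1, e2, e3] at t2 t3 t4
    have q2 := congrArg (fun x : ℕ => (x : ℚ)) t2
    have q3 := congrArg (fun x : ℕ => (x : ℚ)) t3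
    have q4 := congrArg (fun x : ℕ => (x : ℚ)) t4
    have qsym := congrArg (fun x : ℕ => (x : ℚ)) tsym
    have q5 := congrArg (fun x : ℕ => (x : ℚ)) t5
    push_cast at q2 q3 q4 qsym q5
    apply mul_left_cancel₀ hn1
    linear_combination (-(((n : ℚ) + 1) * ((n : ℚ) + 1))) * q2
      + (-(((n : ℚ) + 1) * (2 * (n : ℚ) + 3))) * q3
      + (-((2 * (n : ℚ) + 3) * (2 * (n : ℚ) + 2) * ((n : ℚ) + 1))) * qsym
      + (-((2 * (n : ℚ) + 3) * (2 * (n : ℚ) + 2))) * q4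
      + (-((2 * (n : ℚ) + 3) * (2 * (n : ℚ) + 2) * (2 * (n : ℚ) + 1))) * q5
  have hf0 : ((n : ℚ) + 1) * ((2 * n + 1) * (2 * n + 2) * (2 * n + 3) ^ 2) *
      ((1 / (n + 1 : ℚ)) * ((2 * n + 2).choose (n - l)) * catalan n) = f 0 := by
    have hfz : f 0 = ((n : ℚ) - l + 1) * (((n : ℚ) + 1) * ((n : ℚ) + 2)) *
        ((2 * n + 3).choose (n + 1 - l)) * ((2 * n + 3).choose (n + 2)) := by
      simp only [hf, Nat.sub_zero]
      push_cast
      ring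
    rw [hfz]
    have hclear : ((n : ℚ) + 1) * ((2 * n + 1) * (2 * n + 2) * (2 * n + 3) ^ 2) *
        ((1 / (n + 1 : ℚ)) * ((2 * n + 2).choose (n - l)) * catalan n)
        = ((2 * n + 1 : ℚ) * (2 * n + 2) * (2 * n + 3) ^ 2) *
          ((2 * n + 2).choose (n - l)) * catalan n := by
      field_simp
    rw [hclear]
    linear_combination
      (-(((n : ℚ) + 1) * ((n : ℚ) + 2) * ((2 * n + 3).choose (n + 2) : ℚ))) * hA1q +
      (-((2 * (n : ℚ) + 3) * ((2 * n + 2).choose (n - l) : ℚ))) * hB1q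
  rw [htop, sub_zero] at hsum
  exact mul_left_cancel₀ (by positivity) (hf0.trans hsum.symm)
end

section
/- For all integers n >= l >= 0, (1/(n+1))*binom(2n+2, n-l)*C_{n+1} = \sum_{k=0}^{n-l} (2k+2)(2k+l+3)(2k+2l+4) / ((2n+2)(2n+3)(2n+4)^2) * binom(2n+4, n-k-l) * binom(2n+4, n-k+1). -/
open Finset

/-!
The identity is proved by telescoping (Gosper's algorithm / the WZ method). Writing both binomial
coefficients of the summand in their symmetric forms `C(2n+4, n+k+l+4)` and `C(2n+4, n+k+3)`,
the summand is `G k - G (k+1)` for the explicit certificate `G = catalanCertificate n l`, which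
is a polynomial multiple of the same two binomials: the ratios `C(N, r+1) / C(N, r)` make this a
rational-function identity. The sum therefore collapses to `G 0 - G (n-l+1)`; the last term
vanishes because `n+(n-l+1)+l+4 > 2n+4`, and `G 0` reduces to the left-hand side after lifting
`C(2n+2, ·)` to `C(2n+4, ·)` and writing `C_{n+1} = C(2n+2, n+1) / (n+2)`.
-/

theorem Nat.cast_choose_succ_right_mul {R : Type*} [CommRing R] (N r : ℕ) :
    (N.choose (r + 1) : R) * (r + 1) = N.choose r * (N - r) := by
  rcases le_or_gt r N with hr | hr
  · have h := congrArg (Nat.cast : ℕ → R) (Nat.choose_succ_right_eq N r)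
    push_cast [hr] at h
    exact h
  · simp [Nat.choose_eq_zero_of_lt hr, Nat.choose_eq_zero_of_lt (hr.trans (Nat.lt_succ_self r))]

theorem Nat.choose_add_two_mul (M r : ℕ) :
    (M + 2).choose (r + 2) * ((r + 2) * (r + 1)) = (M + 2) * (M + 1) * M.choose r := by
  rw [← mul_assoc, ← Nat.add_one_mul_choose_eq, mul_assoc, ← Nat.add_one_mul_choose_eq]
  ring

def catalanSummand (n l k : ℕ) : ℚ :=
  (2 * k + 2) * (2 * k + l + 3) * (2 * k + 2 * l + 4) /
      ((2 * n + 2) * (2 * n + 3) * (2 * n + 4) ^ 2) *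
    (2 * n + 4).choose (n + k + l + 4) * (2 * n + 4).choose (n + k + 3)

def catalanCertificate (n l k : ℕ) : ℚ :=
  2 * (2 * k ^ 4 + (4 * n + 4 * l + 18) * k ^ 3
      + (2 * n ^ 2 + 6 * n * l + 2 * l ^ 2 + 23 * n + 25 * l + 55) * k ^ 2
      + (2 * n ^ 2 * l + 6 * n ^ 2 + 2 * n * l ^ 2 + 21 * n * l + 41 * n + 7 * l ^ 2 + 46 * l + 69)
        * k
      + (n + 3) * (n + l + 3) * (n + l + 4)) /
      ((2 * n + 2) * (2 * n + 3) ^ 2 * (2 * n + 4) ^ 2) *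
    (2 * n + 4).choose (n + k + l + 4) * (2 * n + 4).choose (n + k + 3)

theorem catalanSummand_eq_sub (n l k : ℕ) :
    catalanSummand n l k = catalanCertificate n l k - catalanCertificate n l (k + 1) := by
  have hA := Nat.cast_choose_succ_right_mul (R := ℚ) (2 * n + 4) (n + k + l + 4)
  have hB := Nat.cast_choose_succ_right_mul (R := ℚ) (2 * n + 4) (n + k + 3)
  rw [← eq_div_iff (by positivity)] at hA hB
  unfold catalanSummand catalanCertificate
  rw [show n + (k + 1) + l + 4 = n + k + l + 4 + 1 by ring,
    show n + (k + 1) + 3 = n + k + 3 + 1 by ring, hA, hB]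
  field_simp
  push_cast
  ring

theorem catalanCertificate_sub_add_one_eq_zero {n l : ℕ} (h : l ≤ n) :
    catalanCertificate n l (n - l + 1) = 0 := by
  simp [catalanCertificate,
    Nat.choose_eq_zero_of_lt (show 2 * n + 4 < n + (n - l + 1) + l + 4 by omega)]

theorem catalanCertificate_zero {n l : ℕ} (h : l ≤ n) :
    catalanCertificate n l 0 =
      1 / (n + 1 : ℚ) * (2 * n + 2).choose (n - l) * catalan (n + 1) := by
  have hcat : (catalan (n + 1) : ℚ) = (2 * n + 2).choose (n + 1) / (n + 2) := by
    rw [eq_div_iff (by positivity), mul_comm]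
    exact_mod_cast succ_mul_catalan_eq_centralBinom (n + 1)
  have hsymm : (2 * n + 2).choose (n - l) = (2 * n + 2).choose (n + l + 2) :=
    Nat.choose_symm_of_eq_add (by omega)
  have hA : ((2 * n + 4).choose (n + l + 4) : ℚ) * ((n + l + 4) * (n + l + 3)) =
      (2 * n + 4) * (2 * n + 3) * (2 * n + 2).choose (n + l + 2) := by
    exact_mod_cast Nat.choose_add_two_mul (2 * n + 2) (n + l + 2)
  have hB : ((2 * n + 4).choose (n + 3) : ℚ) * ((n + 3) * (n + 2)) =
      (2 * n + 4) * (2 * n + 3) * (2 * n + 2).choose (n + 1) := by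
    exact_mod_cast Nat.choose_add_two_mul (2 * n + 2) (n + 1)
  rw [← eq_div_iff (by positivity)] at hA hB
  simp only [catalanCertificate, Nat.cast_zero, add_zero]
  rw [hsymm, hcat, hA, hB]
  field_simp
  ring

theorem stmt_13 (n l : ℕ) (h : l ≤ n) :
    (1 / (n + 1 : ℚ)) * ((2 * n + 2).choose (n - l)) * catalan (n + 1) =
      ∑ k ∈ Finset.range (n - l + 1),
        ((2 * k + 2 : ℚ) * (2 * k + l + 3) * (2 * k + 2 * l + 4)) /
            ((2 * n + 2 : ℚ) * (2 * n + 3) * (2 * n + 4) ^ 2) *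
          ((2 * n + 4).choose (n - k - l)) * ((2 * n + 4).choose (n - k + 1)) := by
  have hsummand : ∀ k ∈ range (n - l + 1),
      ((2 * k + 2 : ℚ) * (2 * k + l + 3) * (2 * k + 2 * l + 4)) /
            ((2 * n + 2 : ℚ) * (2 * n + 3) * (2 * n + 4) ^ 2) *
          ((2 * n + 4).choose (n - k - l)) * ((2 * n + 4).choose (n - k + 1)) =
        catalanSummand n l k := by
    intro k hk
    have hkl : k + l ≤ n := by rw [mem_range] at hk; omega
    rw [catalanSummand,
      Nat.choose_symm_of_eq_add (show 2 * n + 4 = n - k - l + (n + k + l + 4) by omega),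
      Nat.choose_symm_of_eq_add (show 2 * n + 4 = n - k + 1 + (n + k + 3) by omega)]
  rw [sum_congr rfl hsummand]
  simp only [catalanSummand_eq_sub, sum_range_sub', catalanCertificate_sub_add_one_eq_zero h,
    catalanCertificate_zero h, sub_zero]
end

section
/- For all integers n >= l >= 0, (1/(n+1))*binom(2n+2, n-l)*binom(2n+1, n) = \sum_{k=0}^{n-l} (2k+l+2) / ((2n+2)(2n+3)) * binom(2n+3, n-k-l) * binom(2n+3, n-k+1). -/
private lemma lemA_s14 (m k : ℕ) : ((k:ℚ)+1) * (m.choose (k+1)) = ((m:ℚ) - k) * (m.choose k) := by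
  rcases le_or_gt k m with hk | hk
  · have := Nat.choose_succ_right_eq m k
    have hc := congrArg (Nat.cast : ℕ → ℚ) this
    push_cast [Nat.cast_sub hk] at hc
    linarith [hc]
  · rw [Nat.choose_eq_zero_of_lt hk, Nat.choose_eq_zero_of_lt (by omega)]
    simp

private lemma lemB_s14 (m k : ℕ) : ((k:ℚ)+1) * ((m+1).choose (k+1)) = ((m:ℚ)+1) * (m.choose k) := by
  have := Nat.add_one_mul_choose_eq m k
  have hc := congrArg (Nat.cast : ℕ → ℚ) this
  push_cast at hc
  linarith [hc]

private lemma sumlem (n l : ℕ) : ∀ J : ℕ,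
    (2*(n:ℚ)+3) * ∑ j ∈ Finset.range (J+1),
      (2*(n:ℚ) - l + 2 - 2*j) * ((2*n+3).choose j) * ((2*n+3).choose (j+l+1)) =
    ((J:ℚ)+1) * (2*(n:ℚ) - l + 2 - J) * ((2*n+3).choose (J+1)) * ((2*n+3).choose (J+l+1)) := by
  intro J
  induction J with
  | zero =>
      simp only [Finset.sum_range_one, Nat.cast_zero, Nat.choose_zero_right, zero_add,
        Nat.choose_one_right]
      push_cast
      ring
  | succ J ih =>
      rw [Finset.sum_range_succ, mul_add, ih]
      have e1 : J + 1 + 1 = J + 2 := by omega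
      have e2 : J + 1 + l + 1 = J + l + 2 := by omega
      rw [e1, e2]
      have h1 := lemA_s14 (2*n+3) (J+1)
      have h2 := lemA_s14 (2*n+3) (J+l+1)
      rw [show J+1+1 = J+2 from rfl] at h1
      rw [show J+l+1+1 = J+l+2 from rfl] at h2
      push_cast at h1 h2 ⊢
      linear_combination (-(2*(n:ℚ) - l + 1 - J) * ((2*n+3).choose (J+l+2))) * h1
        - (((J:ℚ)+1) * ((2*n+3).choose (J+1))) * h2

theorem stmt_14 (n l : ℕ) (h : l ≤ n) :
    (1 / (n + 1 : ℚ)) * ((2 * n + 2).choose (n - l)) * ((2 * n + 1).choose n) =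
      ∑ k ∈ Finset.range (n - l + 1),
        (2 * k + l + 2 : ℚ) / ((2 * n + 2 : ℚ) * (2 * n + 3)) *
          ((2 * n + 3).choose (n - k - l)) * ((2 * n + 3).choose (n - k + 1)) := by
  obtain ⟨N, rfl⟩ := Nat.exists_eq_add_of_le h
  set m : ℕ := 2 * (l + N) + 3 with hm
  set D : ℚ := (2 * ((l:ℚ) + N) + 2) * (2 * ((l:ℚ) + N) + 3) with hD
  have hNl : l + N - l = N := by omega
  rw [hNl]
  have hDcast : ((2 * (l + N) : ℕ) + 2 : ℚ) * ((2 * (l + N) : ℕ) + 3) = D := by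
    push_cast [hD]; ring
  -- reflect the sum
  have hrefl : ∑ k ∈ Finset.range (N + 1),
      (2 * (k:ℚ) + l + 2) / D * (m.choose (l + N - k - l)) * (m.choose (l + N - k + 1)) =
      ∑ j ∈ Finset.range (N + 1),
      (2 * ((N:ℚ) - j) + l + 2) / D * (m.choose j) * (m.choose (j + l + 1)) := by
    rw [← Finset.sum_range_reflect
      (fun j => (2 * ((N:ℚ) - j) + l + 2) / D * (m.choose j) * (m.choose (j + l + 1))) (N+1)]
    refine Finset.sum_congr rfl (fun k hk => ?_)
    have hkN : k ≤ N := by simpa [Nat.lt_succ_iff] using hk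
    have e1 : l + N - k - l = N - k := by omega
    have e2 : l + N - k + 1 = (N - k) + l + 1 := by omega
    have e3 : N + 1 - 1 - k = N - k := by omega
    rw [e1, e2, e3]
    have e4 : ((N:ℚ) - (N - k : ℕ)) = (k:ℚ) := by
      have : ((N - k : ℕ) : ℚ) = (N:ℚ) - k := by
        push_cast [Nat.cast_sub hkN]; ring
      rw [this]; ring
    rw [e4]
  push_cast
  rw [hrefl]
  -- rewrite each summand to pull out 1/D, matching sumlem's form
  have hterm : ∀ j ∈ Finset.range (N + 1),
      (2 * ((N:ℚ) - j) + l + 2) / D * (m.choose j) * (m.choose (j + l + 1)) =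
      (1 / D) * ((2 * ((l:ℚ) + N) - l + 2 - 2 * j) * (m.choose j) * (m.choose (j + l + 1))) := by
    intro j hj
    ring
  rw [Finset.sum_congr rfl hterm, ← Finset.mul_sum]
  have key := sumlem (l + N) l N
  rw [← hm] at key
  rw [show N + l + 1 = l + N + 1 from by omega] at key
  push_cast at key
  have hS : ∑ j ∈ Finset.range (N+1),
      (2 * ((l:ℚ) + N) - l + 2 - 2 * j) * (m.choose j) * (m.choose (j + l + 1)) =
      (((N:ℚ)+1) * (2 * ((l:ℚ) + N) - l + 2 - N) * (m.choose (N+1)) * (m.choose (l+N+1)))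
        / (2 * ((l:ℚ) + N) + 3) := by
    rw [eq_div_iff (by positivity)]
    linear_combination key
  -- boundary binomial relations
  have hA := lemB_s14 (2 * (l + N) + 2) N
  have hB := lemB_s14 (2 * (l + N) + 2) (l + N)
  have hC1 := lemA_s14 (2 * (l + N) + 2) (l + N)
  have hC2 := lemB_s14 (2 * (l + N) + 1) (l + N)
  have em : 2 * (l + N) + 2 + 1 = m := by omega
  have em2 : 2 * (l + N) + 1 + 1 = 2 * (l + N) + 2 := by omega
  rw [em] at hA hB
  rw [em2] at hC2
  push_cast at hA hB hC1 hC2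
  have hn1 : ((l:ℚ) + N + 1) ≠ 0 := by positivity
  have hDne : D ≠ 0 := by rw [hD]; positivity
  have h2n3 : (2 * ((l:ℚ) + N) + 3) ≠ 0 := by positivity
  rw [hS]
  -- finish
  field_simp
  linear_combination
    (((2*(l+N)+2).choose N : ℚ) * ((2*(l+N)+1).choose (l+N)) * (2*((l:ℚ)+N)+3)) * hD
    - (((l:ℚ)+N+1) * ((l:ℚ)+N+2) * (m.choose (l+N+1))) * hA
    - ((((l:ℚ)+N+2) * (2*((l:ℚ)+N)+3)) * ((2*(l+N)+2).choose N : ℚ)) * hB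
    + ((2*((l:ℚ)+N)+3)^2 * ((2*(l+N)+2).choose N : ℚ)) * hC1
    - ((2*((l:ℚ)+N)+3)^2 * ((2*(l+N)+2).choose N : ℚ)) * hC2
end

section
/- For every nonnegative integer n, \sum_{k=0}^{n} (2k+1)^3 * binom(2n+1, n-k)^2 = (2n+1)^2 * binom(2n,n)^2. -/
/-!
A Wilf–Zeilberger telescoping argument. With `c k = binom(2n+1, n-k)`, Gosper's algorithm gives
the antidifference `F k = (n+k+1)^2 (2k^2+n) (c k)^2` of `n (2k+1)^3 (c k)^2`: the binomial
recurrence `(n+k+2) c (k+1) = (n-k) c k` reduces `F k - F (k+1) = n (2k+1)^3 (c k)^2` to a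
polynomial identity. Summing gives `n` times the sum equal to `F 0 = n ((n+1) binom(2n+1,n))^2`,
and `(n+1) binom(2n+1,n) = (2n+1) binom(2n,n)`.
-/

open Finset

theorem Finset.sum_range_add_eq_of_add_eq {M : Type*} [AddCommMonoid M] {f g : ℕ → M} {m : ℕ}
    (h : ∀ k < m, f (k + 1) + g k = f k) : (∑ k ∈ range m, g k) + f m = f 0 := by
  induction m with
  | zero => simp
  | succ m ih =>
    rw [sum_range_succ, add_assoc, add_comm (g m), h m m.lt_succ_self]
    exact ih fun k hk => h k (by omega)

def wzPotential (n k : ℕ) : ℕ :=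
  (n + k + 1) ^ 2 * (2 * k ^ 2 + n) * (2 * n + 1).choose (n - k) ^ 2

theorem wzPotential_succ_add (n k : ℕ) (hk : k < n) :
    wzPotential n (k + 1) + n * ((2 * k + 1) ^ 3 * (2 * n + 1).choose (n - k) ^ 2) =
      wzPotential n k := by
  obtain ⟨j, rfl⟩ : ∃ j, n = k + 1 + j := ⟨n - (k + 1), by omega⟩
  have hsub : k + 1 + j - k = j + 1 := by omega
  have hsub' : k + 1 + j - (k + 1) = j := by omega
  set m := 2 * (k + 1 + j) + 1
  have hrec : m.choose j * (2 * k + j + 3) = m.choose (j + 1) * (j + 1) := by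
    rw [Nat.choose_succ_right_eq, show m - j = 2 * k + j + 3 by omega]
  simp only [wzPotential, hsub, hsub']
  calc (k + 1 + j + (k + 1) + 1) ^ 2 * (2 * (k + 1) ^ 2 + (k + 1 + j)) * m.choose j ^ 2 +
        (k + 1 + j) * ((2 * k + 1) ^ 3 * m.choose (j + 1) ^ 2)
      = (2 * (k + 1) ^ 2 + (k + 1 + j)) * (m.choose j * (2 * k + j + 3)) ^ 2 +
          (k + 1 + j) * ((2 * k + 1) ^ 3 * m.choose (j + 1) ^ 2) := by ring
    _ = (2 * (k + 1) ^ 2 + (k + 1 + j)) * (m.choose (j + 1) * (j + 1)) ^ 2 +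
          (k + 1 + j) * ((2 * k + 1) ^ 3 * m.choose (j + 1) ^ 2) := by rw [hrec]
    _ = (k + 1 + j + k + 1) ^ 2 * (2 * k ^ 2 + (k + 1 + j)) * m.choose (j + 1) ^ 2 := by ring

theorem wzPotential_self (n : ℕ) :
    wzPotential n n = n * ((2 * n + 1) ^ 3 * (2 * n + 1).choose (n - n) ^ 2) := by
  simp only [wzPotential, Nat.sub_self, Nat.choose_zero_right]
  ring

theorem wzPotential_zero (n : ℕ) :
    wzPotential n 0 = n * ((2 * n + 1) ^ 2 * (2 * n).choose n ^ 2) := by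
  have h := Nat.add_one_mul_choose_eq (2 * n) n
  rw [Nat.choose_symm_half] at h
  simp only [wzPotential, Nat.sub_zero]
  calc (n + 0 + 1) ^ 2 * (2 * 0 ^ 2 + n) * (2 * n + 1).choose n ^ 2
      = n * ((2 * n + 1).choose n * (n + 1)) ^ 2 := by ring
    _ = n * ((2 * n + 1) ^ 2 * (2 * n).choose n ^ 2) := by rw [← h]; ring

theorem stmt_15 (n : ℕ) :
    ∑ k ∈ Finset.range (n + 1), (2 * k + 1) ^ 3 * ((2 * n + 1).choose (n - k)) ^ 2 =
      (2 * n + 1) ^ 2 * ((2 * n).choose n) ^ 2 := by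
  rcases Nat.eq_zero_or_pos n with rfl | hn
  · rfl
  apply Nat.eq_of_mul_eq_mul_left hn
  have htelescope := Finset.sum_range_add_eq_of_add_eq (f := wzPotential n)
    (g := fun k => n * ((2 * k + 1) ^ 3 * (2 * n + 1).choose (n - k) ^ 2))
    (wzPotential_succ_add n)
  rw [wzPotential_self, wzPotential_zero, ← sum_range_succ] at htelescope
  rw [mul_sum, htelescope]
end

section
/- For every nonnegative integer n, \sum_{k=0}^{n} (k+1)^3 * binom(2n+2, n-k)^2 = (n+1)^2 * binom(2n,n) * binom(2n+1,n). -/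
/-!
Gosper's algorithm: with `p k = binom(2n+2, n+2+k)` (equal to the summand's `binom(2n+2, n-k)`),
the summand times `8n+4` is the difference `G k - G (k+1)` of
`G k = (2k² + 2k + n + 1) ((n+k+2) p k)²`. The ratio `(n+k+3) p (k+1) = (n-k) p k` turns this into
a polynomial identity in `n` and `k`. The sum telescopes to `G 0 = (n+1) ((n+2) binom(2n+2, n+2))²`,
which is `(8n+4)(n+1)² binom(2n, n) binom(2n+1, n)` by the absorption identities.
-/

open Finset

namespace Nat

theorem add_one_mul_choose_add_one_eq_sub_mul_choose (m j : ℕ) :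
    ((j : ℤ) + 1) * m.choose (j + 1) = ((m : ℤ) - j) * m.choose j := by
  rcases le_or_gt j m with hj | hj
  · have h := congrArg (fun x : ℕ => (x : ℤ)) (choose_succ_right_eq m j)
    push_cast [Nat.cast_sub hj] at h
    linarith
  · simp [choose_eq_zero_of_lt hj, choose_eq_zero_of_lt (Nat.lt_succ_of_lt hj)]

end Nat

def gosperTerm (n k : ℕ) : ℤ :=
  (2 * k ^ 2 + 2 * k + n + 1) * ((n + k + 2) * (2 * n + 2).choose (n + 2 + k)) ^ 2

theorem gosperTerm_sub_gosperTerm_succ (n k : ℕ) :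
    gosperTerm n k - gosperTerm n (k + 1) =
      (8 * n + 4) * ((k : ℤ) + 1) ^ 3 * ((2 * n + 2).choose (n + 2 + k)) ^ 2 := by
  have hratio := Nat.add_one_mul_choose_add_one_eq_sub_mul_choose (2 * n + 2) (n + 2 + k)
  rw [show n + 2 + k + 1 = n + 2 + (k + 1) by ring] at hratio
  simp only [gosperTerm]
  push_cast at hratio ⊢
  rw [show ((n : ℤ) + (k + 1) + 2) = (n + 2 + k) + 1 by ring, hratio]
  ring

theorem gosperTerm_self_add_one (n : ℕ) : gosperTerm n (n + 1) = 0 := by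
  simp [gosperTerm, Nat.choose_eq_zero_of_lt (show 2 * n + 2 < n + 2 + (n + 1) by omega)]

theorem mul_sum_range_cube_mul_choose_sq (n : ℕ) :
    (8 * n + 4 : ℤ) * ∑ k ∈ range (n + 1), ((k : ℤ) + 1) ^ 3 * ((2 * n + 2).choose (n + 2 + k)) ^ 2 =
      gosperTerm n 0 := by
  simp_rw [mul_sum, ← mul_assoc, ← gosperTerm_sub_gosperTerm_succ]
  rw [sum_range_sub', gosperTerm_self_add_one, sub_zero]

theorem gosperTerm_zero (n : ℕ) :
    gosperTerm n 0 = (8 * n + 4) * ((n + 1) ^ 2 * (2 * n).choose n * (2 * n + 1).choose n) := by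
  have h₁ := Nat.add_one_mul_choose_eq (2 * n + 1) (n + 1)
  have h₂ := Nat.add_one_mul_choose_eq (2 * n) n
  rw [Nat.choose_symm_half] at h₁ h₂
  zify at h₁ h₂
  have habsorb : ((n : ℤ) + 2) * (2 * n + 2).choose (n + 2) = 2 * (n + 1) * (2 * n + 1).choose n := by
    linear_combination -h₁
  simp only [gosperTerm, CharP.cast_eq_zero, add_zero, habsorb]
  linear_combination -4 * ((n : ℤ) + 1) ^ 2 * (2 * n + 1).choose n * h₂

theorem stmt_16 (n : ℕ) :
    ∑ k ∈ Finset.range (n + 1), (k + 1) ^ 3 * ((2 * n + 2).choose (n - k)) ^ 2 =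
      (n + 1) ^ 2 * ((2 * n).choose n) * ((2 * n + 1).choose n) := by
  have hsymm : ∀ k ∈ range (n + 1), (2 * n + 2).choose (n - k) = (2 * n + 2).choose (n + 2 + k) :=
    fun k hk => Nat.choose_symm_of_eq_add (by grind)
  rw [sum_congr rfl fun k hk => by rw [hsymm k hk]]
  apply Nat.eq_of_mul_eq_mul_left (show 0 < 8 * n + 4 by omega)
  have h := mul_sum_range_cube_mul_choose_sq n
  rw [gosperTerm_zero] at h
  exact_mod_cast h
end

section
/- For every nonnegative integer n, \sum_{k=0}^{n} (2k+1) * binom(2n+1, n-k)^2 = (2n+1) * binom(2n,n)^2. -/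
lemma stmt_17_aux (n j : ℕ) (h1 : 1 ≤ j) :
    ((2*n+1 : ℤ) - 2*j) * (((2*n+1).choose j : ℤ))^2 =
      (2*n+1) * ((((2*n).choose j : ℤ))^2 - (((2*n).choose (j-1) : ℤ))^2) := by
  obtain ⟨j', rfl⟩ : ∃ j', j = j' + 1 := ⟨j - 1, (Nat.succ_pred_eq_of_pos h1).symm⟩
  have hp : (2*n+1).choose (j'+1) = (2*n).choose j' + (2*n).choose (j'+1) :=
    Nat.choose_succ_succ (2*n) j'
  have hsm : (2*n+1) * (2*n).choose j' = (2*n+1).choose (j'+1) * (j'+1) := by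
    have := Nat.add_one_mul_choose_eq (2*n) j'
    simpa [Nat.succ_eq_add_one, mul_comm] using this
  have hpZ : ((2*n+1).choose (j'+1) : ℤ) = ((2*n).choose j' : ℤ) + ((2*n).choose (j'+1) : ℤ) := by
    exact_mod_cast hp
  have hsmZ : ((2*n+1 : ℤ)) * ((2*n).choose j' : ℤ) = ((2*n+1).choose (j'+1) : ℤ) * (j'+1) := by
    exact_mod_cast hsm
  simp only [Nat.add_sub_cancel]
  rw [hpZ] at hsmZ ⊢
  push_cast at hsmZ ⊢
  linear_combination (2 * (((2*n).choose j' : ℤ) + ((2*n).choose (j'+1) : ℤ))) * hsmZ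

theorem stmt_17 (n : ℕ) :
    ∑ k ∈ Finset.range (n + 1), (2 * k + 1) * ((2 * n + 1).choose (n - k)) ^ 2 =
      (2 * n + 1) * ((2 * n).choose n) ^ 2 := by
  have hZ : (∑ k ∈ Finset.range (n+1), ((2*(k:ℤ)+1) * (((2*n+1).choose (n-k) : ℤ))^2))
      = (2*(n:ℤ)+1) * (((2*n).choose n : ℤ))^2 := by
    set g : ℕ → ℤ := fun k => if k ≤ n then (((2*n).choose (n-k) : ℤ))^2 else 0 with hg
    have hterm : ∀ k ∈ Finset.range (n+1),
        (2*(k:ℤ)+1) * (((2*n+1).choose (n-k) : ℤ))^2 = (2*(n:ℤ)+1) * (g k - g (k+1)) := by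
      intro k hk
      rw [Finset.mem_range] at hk
      have hkn : k ≤ n := Nat.lt_succ_iff.mp hk
      rcases eq_or_lt_of_le hkn with h | h
      · subst h
        simp [hg, Nat.sub_self]
      · -- k < n
        have hk1 : k + 1 ≤ n := h
        have h1 : 1 ≤ n - k := Nat.le_sub_of_add_le (by omega)
        have hgk : g k = (((2*n).choose (n-k) : ℤ))^2 := by simp [hg, hkn]
        have hgk1 : g (k+1) = (((2*n).choose (n-k-1) : ℤ))^2 := by
          have hnk : n - (k+1) = n - k - 1 := by omega
          simp [hg, hk1, hnk]
        have hc : (2*(k:ℤ)+1) = (2*(n:ℤ)+1) - 2*((n-k : ℕ) : ℤ) := by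
          have : ((n-k : ℕ) : ℤ) = (n:ℤ) - k := Nat.cast_sub hkn
          rw [this]; ring
        rw [hgk, hgk1, hc]
        have := stmt_17_aux n (n-k) h1
        push_cast at this ⊢
        linarith [this]
    rw [Finset.sum_congr rfl hterm, ← Finset.mul_sum, Finset.sum_range_sub' g]
    have hg0 : g 0 = (((2*n).choose n : ℤ))^2 := by simp [hg]
    have hgn1 : g (n+1) = 0 := by simp [hg]
    rw [hg0, hgn1, sub_zero]
  exact_mod_cast hZ
end

section
/- For every nonnegative integer m, C_{2m+1} = \sum_{j=0}^{m} (2j+2)^2/(2m+2)^2 * binom(2m+2, m-j)^2, i.e., (2m+2)^2 * C_{2m+1} = \sum_{j=0}^{m} (2j+2)^2 * binom(2m+2, m-j)^2. -/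
open Finset

lemma v1 (m : ℕ) : ∑ i ∈ range (2*m+2), (2*m+1).choose i ^ 2 = (4*m+2).choose (2*m+1) := by
  have h := Nat.add_choose_eq (2*m+1) (2*m+1) (2*m+1)
  rw [Finset.Nat.sum_antidiagonal_eq_sum_range_succ_mk] at h
  rw [show 2*m+1 + (2*m+1) = 4*m+2 by ring] at h
  rw [h]
  apply sum_congr rfl
  intro i hi
  rw [mem_range] at hi
  rw [Nat.choose_symm (by omega), sq]

lemma v2 (m : ℕ) : ∑ i ∈ range (2*m+1), (2*m+1).choose i * (2*m+1).choose (i+1) = (4*m+2).choose (2*m) := by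
  have h := Nat.add_choose_eq (2*m+1) (2*m+1) (2*m)
  rw [Finset.Nat.sum_antidiagonal_eq_sum_range_succ_mk] at h
  rw [show 2*m+1 + (2*m+1) = 4*m+2 by ring] at h
  rw [h]
  apply sum_congr rfl
  intro i hi
  rw [mem_range] at hi
  congr 1
  rw [show 2*m - i = (2*m+1) - (i+1) by omega, Nat.choose_symm (by omega)]

lemma h1 (m : ℕ) : 2 * ∑ i ∈ range (m+1), (2*m+1).choose i ^ 2 = (4*m+2).choose (2*m+1) := by
  have hrefl : ∑ i ∈ Ico (m+1) (2*m+2), (2*m+1).choose i ^ 2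
      = ∑ i ∈ range (m+1), (2*m+1).choose i ^ 2 := by
    have := Finset.sum_Ico_reflect (fun i => (2*m+1).choose i ^ 2) 0 (m := m+1) (n := 2*m+1) (by omega)
    rw [show 2*m+1+1 - (m+1) = m+1 by omega, show 2*m+1+1-0 = 2*m+2 by omega] at this
    rw [← this]
    rw [show Ico 0 (m+1) = range (m+1) by rw [range_eq_Ico]]
    apply sum_congr rfl
    intro i hi
    rw [mem_range] at hi
    show (2*m+1).choose (2*m+1-i) ^ 2 = (2*m+1).choose i ^ 2
    rw [Nat.choose_symm (by omega)]
  rw [two_mul]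
  nth_rewrite 2 [← hrefl]
  rw [range_eq_Ico, Finset.sum_Ico_consecutive _ (by omega) (by omega), ← range_eq_Ico, v1]

lemma h2 (m : ℕ) : 2 * ∑ i ∈ range m, (2*m+1).choose i * (2*m+1).choose (i+1) + (2*m+1).choose m ^ 2 = (4*m+2).choose (2*m) := by
  have hrefl : ∑ i ∈ Ico (m+1) (2*m+1), (2*m+1).choose i * (2*m+1).choose (i+1)
      = ∑ i ∈ range m, (2*m+1).choose i * (2*m+1).choose (i+1) := by
    have := Finset.sum_Ico_reflect (fun i => (2*m+1).choose i * (2*m+1).choose (i+1)) 0 (m := m) (n := 2*m) (by omega)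
    rw [show 2*m+1 - m = m+1 by omega, show 2*m+1-0 = 2*m+1 by omega] at this
    rw [← this]
    rw [show Ico 0 m = range m by rw [range_eq_Ico]]
    apply sum_congr rfl
    intro i hi
    rw [mem_range] at hi
    show (2*m+1).choose (2*m-i) * (2*m+1).choose (2*m-i+1) = _
    rw [show 2*m - i + 1 = (2*m+1) - i by omega, Nat.choose_symm (by omega),
        show (2*m : ℕ) - i = (2*m+1) - (i+1) by omega, Nat.choose_symm (by omega), mul_comm]
  have mid : (2*m+1).choose m * (2*m+1).choose (m+1) = (2*m+1).choose m ^ 2 := by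
    rw [Nat.choose_symm_half, sq]
  have split : ∑ i ∈ range (2*m+1), (2*m+1).choose i * (2*m+1).choose (i+1)
      = ∑ i ∈ range (m+1), (2*m+1).choose i * (2*m+1).choose (i+1)
        + ∑ i ∈ Ico (m+1) (2*m+1), (2*m+1).choose i * (2*m+1).choose (i+1) := by
    exact (Finset.sum_range_add_sum_Ico _ (by omega)).symm
  rw [← v2 m, split, hrefl, Finset.sum_range_succ, mid]
  ring

lemma point (m i : ℕ) (h : i < m) :
    ((2*(m-(i+1))+2 : ℕ) : ℤ) * ((2*m+2).choose (i+1) : ℤ)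
      = (2*m+2) * (((2*m+1).choose (i+1) : ℤ) - (2*m+1).choose i) := by
  have pascal : (2*m+2).choose (i+1) = (2*m+1).choose i + (2*m+1).choose (i+1) := by
    rw [show 2*m+2 = (2*m+1)+1 by ring, Nat.choose_succ_succ']
  have mul1 : (2*m+2) * (2*m+1).choose i = (2*m+2).choose (i+1) * (i+1) := by
    have := Nat.add_one_mul_choose_eq (2*m+1) i
    simpa [Nat.succ_eq_add_one] using this
  have hc : ((m - (i+1) : ℕ) : ℤ) = (m : ℤ) - i - 1 := by
    have hle : i + 1 ≤ m := h
    push_cast [Nat.cast_sub hle]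
    ring
  have p' : ((2*m+2).choose (i+1) : ℤ) = ((2*m+1).choose i : ℤ) + (2*m+1).choose (i+1) := by
    exact_mod_cast congrArg (Nat.cast : ℕ → ℤ) pascal
  have m' : ((2*m+2) : ℤ) * (2*m+1).choose i = ((2*m+2).choose (i+1) : ℤ) * (i+1) := by
    exact_mod_cast congrArg (Nat.cast : ℕ → ℤ) mul1
  push_cast [hc]
  linear_combination (2*(m:ℤ)+2) * p' + 2 * m'


theorem stmt_18 (m : ℕ) :
    (2 * m + 2) ^ 2 * catalan (2 * m + 1) =
      ∑ j ∈ Finset.range (m + 1), (2 * j + 2) ^ 2 * ((2 * m + 2).choose (m - j)) ^ 2 := by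
  have step0 : (∑ j ∈ Finset.range (m + 1), (2*j+2)^2 * ((2*m+2).choose (m-j))^2)
      = ∑ k ∈ range (m+1), (2*(m-k)+2)^2 * ((2*m+2).choose k)^2 := by
    rw [← Finset.sum_range_reflect (fun k => (2*(m-k)+2)^2 * ((2*m+2).choose k)^2) (m+1)]
    apply sum_congr rfl
    intro j hj
    rw [mem_range] at hj
    show (2*j+2)^2 * ((2*m+2).choose (m-j))^2 = (2*(m-(m+1-1-j))+2)^2 * ((2*m+2).choose (m+1-1-j))^2
    rw [show m+1-1-j = m - j by omega, show 2*(m-(m-j))+2 = 2*j+2 by omega]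
  rw [step0, Finset.sum_range_succ']
  have h0 : (2*(m-0)+2)^2 * ((2*m+2).choose 0)^2 = (2*m+2)^2 := by simp
  rw [h0]
  have main : ((2*m+2 : ℕ):ℤ)^2 * (catalan (2*m+1) : ℤ)
      = (∑ i ∈ range m, ((2*(m-(i+1))+2 : ℕ):ℤ)^2 * (((2*m+2).choose (i+1) : ℕ):ℤ)^2)
        + ((2*m+2 : ℕ):ℤ)^2 := by
    have trans1 : (∑ i ∈ range m, ((2*(m-(i+1))+2 : ℕ):ℤ)^2 * (((2*m+2).choose (i+1) : ℕ):ℤ)^2)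
        = ∑ i ∈ range m,
            ((2*m+2 : ℤ))^2 * ((((2*m+1).choose (i+1) : ℕ):ℤ) - (((2*m+1).choose i : ℕ):ℤ))^2 := by
      apply sum_congr rfl
      intro i hi
      rw [mem_range] at hi
      rw [← mul_pow, point m i hi, mul_pow]
    rw [trans1, ← Finset.mul_sum]
    have expand : (∑ i ∈ range m,
          ((((2*m+1).choose (i+1) : ℕ):ℤ) - (((2*m+1).choose i : ℕ):ℤ))^2)
        = (∑ i ∈ range m, (((2*m+1).choose (i+1) : ℕ):ℤ)^2)
          + (∑ i ∈ range m, (((2*m+1).choose i : ℕ):ℤ)^2)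
          - 2 * ∑ i ∈ range m, (((2*m+1).choose i : ℕ):ℤ) * (((2*m+1).choose (i+1) : ℕ):ℤ) := by
      rw [← Finset.sum_add_distrib, Finset.mul_sum, ← Finset.sum_sub_distrib]
      apply sum_congr rfl
      intro i _
      ring
    have e1 : (∑ i ∈ range m, (((2*m+1).choose (i+1) : ℕ):ℤ)^2)
        = (∑ i ∈ range (m+1), (((2*m+1).choose i : ℕ):ℤ)^2) - 1 := by
      rw [Finset.sum_range_succ']
      simp
    have e2 : (∑ i ∈ range m, (((2*m+1).choose i : ℕ):ℤ)^2)
        = (∑ i ∈ range (m+1), (((2*m+1).choose i : ℕ):ℤ)^2) - (((2*m+1).choose m : ℕ):ℤ)^2 := by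
      rw [Finset.sum_range_succ]
      ring
    have h1' : 2 * (∑ i ∈ range (m+1), (((2*m+1).choose i : ℕ):ℤ)^2)
        = (((4*m+2).choose (2*m+1) : ℕ):ℤ) := by
      exact_mod_cast congrArg (Nat.cast : ℕ → ℤ) (h1 m)
    have h2' : 2 * (∑ i ∈ range m, (((2*m+1).choose i : ℕ):ℤ) * (((2*m+1).choose (i+1) : ℕ):ℤ))
        + (((2*m+1).choose m : ℕ):ℤ)^2 = (((4*m+2).choose (2*m) : ℕ):ℤ) := by
      exact_mod_cast congrArg (Nat.cast : ℕ → ℤ) (h2 m)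
    have cat1 : ((2*m+2 : ℕ):ℤ) * (catalan (2*m+1) : ℤ) = (((4*m+2).choose (2*m+1) : ℕ):ℤ) := by
      have := succ_mul_catalan_eq_centralBinom (2*m+1)
      rw [Nat.centralBinom_eq_two_mul_choose, show 2*(2*m+1) = 4*m+2 by ring] at this
      exact_mod_cast congrArg (Nat.cast : ℕ → ℤ) this
    have cat2 : (((4*m+2).choose (2*m+1) : ℕ):ℤ) * (2*m+1)
        = (((4*m+2).choose (2*m) : ℕ):ℤ) * (2*m+2) := by
      have := Nat.choose_succ_right_eq (4*m+2) (2*m)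
      rw [show 4*m+2 - 2*m = 2*m+2 by omega] at this
      exact_mod_cast congrArg (Nat.cast : ℕ → ℤ) this
    rw [expand, e1, e2]
    push_cast at h1' h2' cat1 cat2 ⊢
    linear_combination (-(2*(m:ℤ)+2)^2) * h1' + ((2*(m:ℤ)+2)^2) * h2' + (2*(m:ℤ)+2) * cat1
      - (2*(m:ℤ)+2) * cat2
  exact_mod_cast main
end

section
/- For every nonnegative integer m, (2m+2)(2m+3) * C_{2m+2} = \sum_{j=0}^{m} (2j+2)^2 * binom(2m+3, m-j) * binom(2m+3, m-j+1). -/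
open Finset

lemma vand_sq (M : ℕ) : ∑ i ∈ range (M+1), (M.choose i)^2 = (2*M).choose M := by
  have h := Nat.add_choose_eq M M M
  rw [Finset.Nat.sum_antidiagonal_eq_sum_range_succ_mk] at h
  rw [two_mul, h]
  refine Finset.sum_congr rfl fun i hi => ?_
  rw [Finset.mem_range] at hi
  rw [Nat.choose_symm (by omega), sq]

lemma vand_adj (M : ℕ) : ∑ i ∈ range (M+2), ((M+1).choose i) * ((M+1).choose (i+1)) = (2*M+2).choose M := by
  have h := Nat.add_choose_eq (M+1) (M+1) M
  rw [Finset.Nat.sum_antidiagonal_eq_sum_range_succ_mk] at h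
  rw [Finset.sum_range_succ, Nat.choose_succ_self, mul_zero, add_zero]
  rw [show (M+1)+(M+1) = 2*M+2 by ring] at h
  rw [h]
  refine Finset.sum_congr rfl fun i hi => ?_
  rw [Finset.mem_range] at hi
  congr 1
  rw [show M - i = (M+1) - (i+1) by omega, Nat.choose_symm (by omega)]

lemma sqsum (m : ℕ) :
    ∑ i ∈ range (2*m+4), ((2*(m:ℤ)+3) - 2*i)^2 * ((2*m+3).choose i : ℤ)^2
      = 2*(2*(m:ℤ)+3) * ((4*m+4).choose (2*m+2) : ℤ) := by
  rw [Finset.sum_range_succ']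
  have perterm : ∀ k ∈ range (2*m+3),
      ((2*(m:ℤ)+3) - 2*(k+1:ℕ))^2 * ((2*m+3).choose (k+1) : ℤ)^2
        = (2*(m:ℤ)+3)^2 * (((2*m+2).choose (k+1) : ℤ) - ((2*m+2).choose k : ℤ))^2 := by
    intro k hk
    rw [Finset.mem_range] at hk
    have h1 : ((k:ℤ)+1) * ((2*m+3).choose (k+1) : ℤ) = (2*(m:ℤ)+3) * ((2*m+2).choose k : ℤ) := by
      have := Nat.add_one_mul_choose_eq (2*m+2) k
      have h := congrArg (Nat.cast : ℕ → ℤ) this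
      push_cast at h
      linarith [h]
    have h2 : ((2*(m:ℤ)+3) - (k+1)) * ((2*m+3).choose (k+1) : ℤ)
        = (2*(m:ℤ)+3) * ((2*m+2).choose (k+1) : ℤ) := by
      have ha := Nat.choose_succ_right_eq (2*m+3) (k+1)
      have hb := Nat.add_one_mul_choose_eq (2*m+2) (k+1)
      have ha' := congrArg (Nat.cast : ℕ → ℤ) ha
      have hb' := congrArg (Nat.cast : ℕ → ℤ) hb
      rw [Nat.cast_mul, Nat.cast_mul, Nat.cast_sub (by omega)] at ha'
      push_cast at ha' hb'
      nlinarith [ha', hb']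
    have key : ((2*(m:ℤ)+3) - 2*(k+1:ℕ)) * ((2*m+3).choose (k+1) : ℤ)
        = (2*(m:ℤ)+3) * (((2*m+2).choose (k+1) : ℤ) - ((2*m+2).choose k : ℤ)) := by
      push_cast
      linarith [h1, h2]
    have : ((2*(m:ℤ)+3) - 2*(k+1:ℕ))^2 * ((2*m+3).choose (k+1) : ℤ)^2
        = (((2*(m:ℤ)+3) - 2*(k+1:ℕ)) * ((2*m+3).choose (k+1) : ℤ))^2 := by ring
    rw [this, key]; ring
  rw [Finset.sum_congr rfl perterm]
  have hS3 : (∑ k ∈ range (2*m+3), ((2*m+2).choose k : ℤ)^2) = ((4*m+4).choose (2*m+2) : ℤ) := by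
    have h := vand_sq (2*m+2)
    rw [show 2*(2*m+2) = 4*m+4 by ring] at h
    exact_mod_cast congrArg (Nat.cast : ℕ → ℤ) h
  have hS2 : (∑ k ∈ range (2*m+3), ((2*m+2).choose k : ℤ) * ((2*m+2).choose (k+1) : ℤ))
      = ((4*m+4).choose (2*m+1) : ℤ) := by
    have h := vand_adj (2*m+1)
    rw [show 2*m+1+1 = 2*m+2 by ring, show 2*(2*m+1)+2 = 4*m+4 by ring] at h
    exact_mod_cast congrArg (Nat.cast : ℕ → ℤ) h
  have hS1 : (∑ k ∈ range (2*m+3), ((2*m+2).choose (k+1) : ℤ)^2)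
      = ((4*m+4).choose (2*m+2) : ℤ) - 1 := by
    have e1 : (∑ k ∈ range (2*m+3), ((2*m+2).choose (k+1) : ℤ)^2)
        = (∑ k ∈ range (2*m+2), ((2*m+2).choose (k+1) : ℤ)^2)
          + ((2*m+2).choose (2*m+2+1) : ℤ)^2 := Finset.sum_range_succ _ _
    rw [Nat.choose_succ_self] at e1
    have e2 := Finset.sum_range_succ' (fun k => ((2*m+2).choose k : ℤ)^2) (2*m+2)
    rw [hS3] at e2
    simp only [Nat.choose_zero_right, Nat.cast_one] at e1 e2
    push_cast at e1 e2 ⊢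
    linarith [e1, e2]
  have hr : ((4*m+4).choose (2*m+1) : ℤ) * (2*m+3) = ((4*m+4).choose (2*m+2) : ℤ) * (2*m+2) := by
    have h := Nat.choose_succ_right_eq (4*m+4) (2*m+1)
    have h' := congrArg (Nat.cast : ℕ → ℤ) h
    rw [Nat.cast_mul, Nat.cast_mul, Nat.cast_sub (by omega)] at h'
    rw [show 2*m+1+1 = 2*m+2 by ring] at h'
    push_cast at h' ⊢
    linarith [h']
  have expand : (∑ k ∈ range (2*m+3),
      (2*(m:ℤ)+3)^2 * (((2*m+2).choose (k+1) : ℤ) - ((2*m+2).choose k : ℤ))^2)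
      = (2*(m:ℤ)+3)^2 * ((∑ k ∈ range (2*m+3), ((2*m+2).choose (k+1) : ℤ)^2)
        + (∑ k ∈ range (2*m+3), ((2*m+2).choose k : ℤ)^2))
        - 2*(2*(m:ℤ)+3)^2 * (∑ k ∈ range (2*m+3), ((2*m+2).choose k : ℤ) * ((2*m+2).choose (k+1) : ℤ)) := by
    rw [← Finset.sum_add_distrib, Finset.mul_sum, Finset.mul_sum, ← Finset.sum_sub_distrib]
    refine Finset.sum_congr rfl fun k _ => by ring
  rw [expand, hS1, hS2, hS3]
  simp only [Nat.cast_ofNat, Nat.cast_zero, Nat.choose_zero_right, Nat.cast_one]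
  push_cast
  linear_combination (-2*(2*(m:ℤ)+3)) * hr
def bb (m i : ℕ) : ℤ := ((2*m+3).choose i : ℤ)
def gg (m i : ℕ) : ℤ := ((2*(m:ℤ)+2) - 2*i)^2 * bb m i * bb m (i+1)
def GG (m i : ℕ) : ℤ := ((2*(m:ℤ)+4) - 2*i) * i * (bb m i)^2
def ee (m i : ℕ) : ℤ := ((2*(m:ℤ)+3) - ((2*(m:ℤ)+3) - 2*i)^2) * (bb m i)^2

lemma L1 (m : ℕ) : ∑ j ∈ range (m+1), (2*(j:ℤ)+2)^2 * bb m (m-j) * bb m (m-j+1)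
    = ∑ i ∈ range (m+1), gg m i := by
  rw [← Finset.sum_range_reflect (fun i => gg m i) (m+1)]
  refine Finset.sum_congr rfl fun j hj => ?_
  rw [Finset.mem_range] at hj
  have hj' : j ≤ m := by omega
  simp only [Nat.add_sub_cancel, gg]
  rw [Nat.cast_sub hj']
  ring

lemma L2 (m : ℕ) : ∑ i ∈ range (2*m+3), gg m i = 2 * ∑ i ∈ range (m+1), gg m i := by
  rw [show 2*m+3 = (m+1)+(m+2) by ring, Finset.sum_range_add,
      Finset.sum_range_succ' (fun x => gg m (m+1+x)) (m+1)]
  have h0 : gg m (m+1+0) = 0 := by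
    simp only [gg]
    have : (2*(m:ℤ)+2) - 2*((m:ℕ)+1+0 : ℕ) = 0 := by push_cast; ring
    rw [this]; ring
  rw [h0, add_zero]
  have hsym : ∀ x ∈ range (m+1), gg m (m+1+(x+1)) = gg m (m-x) := by
    intro x hx
    rw [Finset.mem_range] at hx
    have hx' : x ≤ m := by omega
    have c1 : (2*m+3).choose ((m-x)+1) = (2*m+3).choose (m+1+(x+1)) := by
      rw [show (m-x)+1 = (2*m+3) - (m+1+(x+1)) by omega]
      exact Nat.choose_symm (by omega)
    have c2 : (2*m+3).choose (m-x) = (2*m+3).choose (m+1+(x+1)+1) := by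
      rw [show m-x = (2*m+3) - (m+1+(x+1)+1) by omega]
      exact Nat.choose_symm (by omega)
    simp only [gg, bb]
    rw [← c1, ← c2, Nat.cast_sub hx']
    push_cast
    ring
  rw [Finset.sum_congr rfl hsym, ← Finset.sum_range_reflect (fun i => gg m i) (m+1)]
  simp only [Nat.add_sub_cancel]
  ring

lemma L3 (m : ℕ) : ∑ i ∈ range (2*m+3), gg m i
    = (GG m (2*m+3) - GG m 0) + ∑ i ∈ range (2*m+3), ee m i := by
  rw [← Finset.sum_range_sub (GG m), ← Finset.sum_add_distrib]
  refine Finset.sum_congr rfl fun i hi => ?_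
  rw [Finset.mem_range] at hi
  have h : ((i:ℤ)+1) * bb m (i+1) = ((2*(m:ℤ)+3) - i) * bb m i := by
    have ha := Nat.choose_succ_right_eq (2*m+3) i
    have ha' := congrArg (Nat.cast : ℕ → ℤ) ha
    rw [Nat.cast_mul, Nat.cast_mul, Nat.cast_sub (by omega)] at ha'
    simp only [bb]
    push_cast at ha' ⊢
    linarith [ha']
  simp only [gg, GG, ee]
  push_cast
  linear_combination (-((2*(m:ℤ)+2) - 2*i)) * (bb m i + bb m (i+1)) * h

lemma L4 (m : ℕ) : ∑ i ∈ range (2*m+4), ee m i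
    = (2*(m:ℤ)+3) * ((4*m+6).choose (2*m+3) : ℤ) - 2*(2*(m:ℤ)+3) * ((4*m+4).choose (2*m+2) : ℤ) := by
  have split : ∑ i ∈ range (2*m+4), ee m i
      = (2*(m:ℤ)+3) * (∑ i ∈ range (2*m+4), (bb m i)^2)
        - ∑ i ∈ range (2*m+4), ((2*(m:ℤ)+3) - 2*i)^2 * ((2*m+3).choose i : ℤ)^2 := by
    rw [Finset.mul_sum, ← Finset.sum_sub_distrib]
    refine Finset.sum_congr rfl fun i _ => ?_
    simp only [ee, bb]; ring
  rw [split, sqsum m]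
  have hbsq : (∑ i ∈ range (2*m+4), (bb m i)^2) = ((4*m+6).choose (2*m+3) : ℤ) := by
    have h := vand_sq (2*m+3)
    rw [show 2*(2*m+3) = 4*m+6 by ring] at h
    simp only [bb]
    exact_mod_cast congrArg (Nat.cast : ℕ → ℤ) h
  rw [hbsq]

theorem stmt_19 (m : ℕ) :
    (2 * m + 2) * (2 * m + 3) * catalan (2 * m + 2) =
      ∑ j ∈ Finset.range (m + 1),
        (2 * j + 2) ^ 2 * ((2 * m + 3).choose (m - j)) * ((2 * m + 3).choose (m - j + 1)) := by
  have hc1 : ((2*m+3) * catalan (2*m+2) : ℤ) = ((4*m+4).choose (2*m+2) : ℤ) := by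
    have h := succ_mul_catalan_eq_centralBinom (2*m+2)
    rw [Nat.centralBinom_eq_two_mul_choose] at h
    rw [show 2*(2*m+2) = 4*m+4 by ring] at h
    exact_mod_cast congrArg (Nat.cast : ℕ → ℤ) h
  have hc2 : (2*(m:ℤ)+3) * ((4*m+6).choose (2*m+3) : ℤ)
      = 2*(4*(m:ℤ)+5) * ((4*m+4).choose (2*m+2) : ℤ) := by
    have h := Nat.succ_mul_centralBinom_succ (2*m+2)
    rw [Nat.centralBinom_eq_two_mul_choose, Nat.centralBinom_eq_two_mul_choose] at h
    rw [show 2*(2*m+2+1) = 4*m+6 by ring, show 2*m+2+1 = 2*m+3 by ring,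
        show 2*(2*m+2) = 4*m+4 by ring] at h
    have h' := congrArg (Nat.cast : ℕ → ℤ) h
    push_cast at h' ⊢
    linarith [h']
  suffices hZ : ((2*m+2) * (2*m+3) * catalan (2*m+2) : ℤ)
      = ∑ j ∈ range (m+1), (2*(j:ℤ)+2)^2 * bb m (m-j) * bb m (m-j+1) by
    simp only [bb] at hZ
    exact_mod_cast hZ
  rw [L1]
  have key : 2 * (∑ i ∈ range (m+1), gg m i)
      = 2 * ((2*(m:ℤ)+2) * ((4*m+4).choose (2*m+2) : ℤ)) := by
    rw [← L2, L3]
    have e1 : ∑ i ∈ range (2*m+3), ee m i = (∑ i ∈ range (2*m+4), ee m i) - ee m (2*m+3) := by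
      have h := Finset.sum_range_succ (ee m) (2*m+3)
      rw [show 2*m+3+1 = 2*m+4 by ring] at h
      linarith [h]
    rw [e1, L4]
    have hG : GG m (2*m+3) = -((2*(m:ℤ)+2) * (2*(m:ℤ)+3)) := by
      simp only [GG, bb, Nat.choose_self]; push_cast; ring
    have hG0 : GG m 0 = 0 := by simp [GG]
    have he : ee m (2*m+3) = (2*(m:ℤ)+3) - (2*(m:ℤ)+3)^2 := by
      simp only [ee, bb, Nat.choose_self]; push_cast; ring
    rw [hG, hG0, he]
    linarith [hc2]
  have hsum : (∑ i ∈ range (m+1), gg m i) = (2*(m:ℤ)+2) * ((4*m+4).choose (2*m+2) : ℤ) := by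
    linarith [key]
  linear_combination (2*(m:ℤ)+2) * hc1 - hsum
end
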